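/- arXiv:0809.2903 — 5 statements merged into one kernel-verified Lean document; each statement's English description precedes it below -/
import Mathlib

section
/- Let V : (0,∞) → ℝ be continuous, let ℓ ≥ 0 be a real parameter, and let E₁ < E₂ be two energies. Let ψ₁ and ψ₂ be regular solutions of the radial Schrödinger equation with potential V, angular momentum ℓ, and energies E₁ and E₂ respectively. If ψ₁ possesses an n-th zero z_n(E₁) ∈ (0,∞) for some n ≥ 1, then ψ₂ has at least n zeros in the open interval (0, z_n(E₁)); in particular the n-th zero z_n(E₂) of ψ₂ exists and satisfies z_n(E₂) < z_n(E₁), i.e. every zero of the regular solution is a strictly decreasing function of the energy. -/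
open Set Filter Topology

/-- `ψ` is a regular solution of the radial Schrödinger equation
`ψ'' + (E − V(r) − ℓ(ℓ+1)/r²) ψ = 0` on `(0,∞)` with boundary condition
`ψ(r)/r^(ℓ+1) → 1` as `r → 0⁺`. -/
def IsRegularSolution (V : ℝ → ℝ) (ℓ E : ℝ) (ψ : ℝ → ℝ) : Prop :=
  (∀ r ∈ Set.Ioi (0 : ℝ), DifferentiableAt ℝ ψ r ∧ DifferentiableAt ℝ (deriv ψ) r) ∧
  (∀ r ∈ Set.Ioi (0 : ℝ),
    deriv (deriv ψ) r + (E - V r - ℓ * (ℓ + 1) / r ^ 2) * ψ r = 0) ∧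
  Tendsto (fun r => ψ r / r ^ (ℓ + 1)) (nhdsWithin 0 (Set.Ioi 0)) (nhds 1)

/-- bounds near 0 -/
lemma reg_bounds {V : ℝ → ℝ} {ℓ E : ℝ} {ψ : ℝ → ℝ} (h : IsRegularSolution V ℓ E ψ) :
    ∃ δ > 0, ∀ r ∈ Set.Ioo (0:ℝ) δ, 0 < ψ r ∧ ψ r ≤ 2 * r ^ (ℓ + 1) := by
  have hev : {r : ℝ | ψ r / r ^ (ℓ+1) ∈ Set.Ioo (1/2 : ℝ) 2} ∈ 𝓝[>] (0:ℝ) :=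
    h.2.2 (Ioo_mem_nhds (by norm_num) (by norm_num))
  rw [mem_nhdsGT_iff_exists_Ioo_subset] at hev
  obtain ⟨u, hu, hsub⟩ := hev
  refine ⟨u, hu, fun r hr => ?_⟩
  have h1 := hsub hr
  have hrp : (0:ℝ) < r ^ (ℓ + 1) := Real.rpow_pos_of_pos hr.1 _
  simp only [Set.mem_setOf_eq, Set.mem_Ioo] at h1
  have ha := (lt_div_iff₀ hrp).mp h1.1
  have hb := (div_lt_iff₀ hrp).mp h1.2
  constructor
  · nlinarith
  · linarith

/-- ratio of two regular solutions tends to 1 -/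
lemma reg_ratio {V : ℝ → ℝ} {ℓ E₁ E₂ : ℝ} {ψ₁ ψ₂ : ℝ → ℝ}
    (h₁ : IsRegularSolution V ℓ E₁ ψ₁) (h₂ : IsRegularSolution V ℓ E₂ ψ₂) :
    Tendsto (fun r => ψ₂ r / ψ₁ r) (𝓝[>] (0:ℝ)) (𝓝 1) := by
  obtain ⟨δ, hδ, hb⟩ := reg_bounds h₁
  have h : Tendsto (fun r => (ψ₂ r / r ^ (ℓ+1)) / (ψ₁ r / r ^ (ℓ+1))) (𝓝[>] (0:ℝ)) (𝓝 1) := by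
    simpa [Pi.div_def] using h₂.2.2.div h₁.2.2 one_ne_zero
  refine h.congr' ?_
  filter_upwards [Ioo_mem_nhdsGT_of_mem (by constructor <;> [rfl; exact hδ] : (0:ℝ) ∈ Set.Ico 0 δ)] with r hr
  have hrp : (0:ℝ) < r ^ (ℓ + 1) := Real.rpow_pos_of_pos hr.1 _
  field_simp

/-- no double zeros: a regular solution cannot vanish to second order -/
lemma no_double_zero {V : ℝ → ℝ} {ℓ E : ℝ} {ψ : ℝ → ℝ}
    (hV : ContinuousOn V (Set.Ioi 0)) (h : IsRegularSolution V ℓ E ψ)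
    {p : ℝ} (hp : 0 < p) (h0 : ψ p = 0) (h0' : deriv ψ p = 0) : False := by
  set q : ℝ → ℝ := fun r => V r + ℓ * (ℓ + 1) / r ^ 2 - E with hq
  have hode : ∀ r ∈ Set.Ioi (0:ℝ), deriv (deriv ψ) r = q r * ψ r := by
    intro r hr
    have := h.2.1 r hr
    simp only [hq]
    linarith
  -- ψ vanishes on (0, p]
  have hz : ∀ c ∈ Set.Ioc (0:ℝ) p, ψ c = 0 := by
    intro c hc
    rcases eq_or_lt_of_le hc.2 with rfl | hcp
    · exact h0
    have hsub : Set.Icc c p ⊆ Set.Ioi (0:ℝ) := fun x hx => lt_of_lt_of_le hc.1 hx.1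
    have hqc : ContinuousOn q (Set.Icc c p) := by
      refine ContinuousOn.sub (ContinuousOn.add (hV.mono hsub) ?_) continuousOn_const
      refine ContinuousOn.div continuousOn_const (by fun_prop) ?_
      intro x hx
      have : (0:ℝ) < x := hsub hx
      positivity
    obtain ⟨C, hC⟩ := (isCompact_Icc (a := c) (b := p)).exists_bound_of_continuousOn hqc
    set K : ℝ := max 1 C with hK
    set f : ℝ → ℝ × ℝ := fun t => (ψ t, deriv ψ t) with hf
    set g : ℝ → ℝ × ℝ := fun s => f (p + c - s) with hg
    set g' : ℝ → ℝ × ℝ := fun s =>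
      (-1 : ℝ) • (deriv ψ (p + c - s), deriv (deriv ψ) (p + c - s)) with hg'
    have hmem : ∀ s ∈ Set.Icc c p, p + c - s ∈ Set.Icc c p := by
      intro s hs
      exact ⟨by linarith [hs.2], by linarith [hs.1]⟩
    have hfd : ∀ t ∈ Set.Icc c p, HasDerivAt f (deriv ψ t, deriv (deriv ψ) t) t := by
      intro t ht
      exact HasDerivAt.prodMk ((h.1 t (hsub ht)).1.hasDerivAt) ((h.1 t (hsub ht)).2.hasDerivAt)
    have hgd : ∀ s ∈ Set.Icc c p, HasDerivAt g (g' s) s := by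
      intro s hs
      have hσ : HasDerivAt (fun s : ℝ => p + c - s) (-1) s := by
        simpa using (hasDerivAt_id s).const_sub (p + c)
      exact (hfd _ (hmem s hs)).scomp s hσ
    have hgc : ContinuousOn g (Set.Icc c p) :=
      fun s hs => ((hgd s hs).continuousAt).continuousWithinAt
    have key := norm_le_gronwallBound_of_norm_deriv_right_le (f := g) (f' := g')
      (δ := 0) (K := K) (ε := 0) (a := c) (b := p) hgc
      (fun s hs => ((hgd s (Set.Ico_subset_Icc_self hs)).hasDerivWithinAt))
      (by
        simp only [hg, hf]
        simp [h0, h0', Prod.norm_def])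
      (by
        intro s hs
        have ht := hmem s (Set.Ico_subset_Icc_self hs)
        have hC' := hC _ ht
        have h1 : ‖g' s‖ = max ‖deriv ψ (p + c - s)‖ ‖deriv (deriv ψ) (p + c - s)‖ := by
          simp [hg', Prod.norm_def]
        have h2 : ‖g s‖ = max ‖ψ (p + c - s)‖ ‖deriv ψ (p + c - s)‖ := by
          simp [hg, hf, Prod.norm_def]
        rw [h1, h2, hode _ (hsub ht)]
        rw [norm_mul]
        have hK1 : (1:ℝ) ≤ K := le_max_left _ _
        have hKC : C ≤ K := le_max_right _ _
        have hnn : (0:ℝ) ≤ max ‖ψ (p + c - s)‖ ‖deriv ψ (p + c - s)‖ :=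
          le_trans (norm_nonneg _) (le_max_left _ _)
        rw [add_zero]
        refine max_le ?_ ?_
        · calc ‖deriv ψ (p + c - s)‖ ≤ max ‖ψ (p + c - s)‖ ‖deriv ψ (p + c - s)‖ :=
            le_max_right _ _
          _ = 1 * _ := (one_mul _).symm
          _ ≤ K * _ := by nlinarith
        · calc ‖q (p + c - s)‖ * ‖ψ (p + c - s)‖
              ≤ K * ‖ψ (p + c - s)‖ := by
                have := norm_nonneg (ψ (p + c - s))
                nlinarith [hC' , norm_nonneg (ψ (p+c-s))]
          _ ≤ K * max ‖ψ (p + c - s)‖ ‖deriv ψ (p + c - s)‖ := by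
                have h0K : (0:ℝ) ≤ K := le_trans zero_le_one hK1
                exact mul_le_mul_of_nonneg_left (le_max_left _ _) h0K
        )
    have := key p ⟨le_of_lt hcp, le_refl p⟩
    rw [gronwallBound_ε0_δ0] at this
    have hgp : g p = (ψ c, deriv ψ c) := by simp [hg, hf]
    rw [hgp] at this
    have : ‖ψ c‖ ≤ 0 := le_trans (le_max_left _ ‖deriv ψ c‖) (by simpa [Prod.norm_def] using this)
    simpa using le_antisymm this (norm_nonneg _)
  -- contradiction with the boundary condition
  have hev : ∀ᶠ r in 𝓝[>] (0:ℝ), ψ r / r ^ (ℓ + 1) = 0 := by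
    filter_upwards [Ioo_mem_nhdsGT_of_mem (⟨le_refl _, hp⟩ : (0:ℝ) ∈ Set.Ico 0 p)] with r hr
    rw [hz r ⟨hr.1, le_of_lt hr.2⟩, zero_div]
  have h1 : Tendsto (fun r : ℝ => ψ r / r ^ (ℓ + 1)) (𝓝[>] (0:ℝ)) (𝓝 0) :=
    Tendsto.congr' (hev.mono fun x hx => hx.symm) tendsto_const_nhds
  have := tendsto_nhds_unique h.2.2 h1
  norm_num at this

/-- if f vanishes at a and is positive just to the right, its derivative at a is ≥ 0 -/
lemma deriv_nonneg_right {f : ℝ → ℝ} {a b d : ℝ} (hab : a < b)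
    (hd : HasDerivAt f d a) (h0 : f a = 0) (hpos : ∀ x ∈ Set.Ioo a b, 0 < f x) :
    0 ≤ d := by
  have hs : Tendsto (slope f a) (𝓝[>] a) (𝓝 d) :=
    (hasDerivAt_iff_tendsto_slope.mp hd).mono_left
      (nhdsWithin_mono _ (fun x hx => ne_of_gt hx))
  refine ge_of_tendsto hs ?_
  filter_upwards [Ioo_mem_nhdsGT_of_mem (⟨le_refl _, hab⟩ : a ∈ Set.Ico a b)] with x hx
  rw [slope_def_field, h0, sub_zero]
  exact le_of_lt (div_pos (hpos x hx) (by linarith [hx.1]))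

/-- if f vanishes at b and is positive just to the left, its derivative at b is ≤ 0 -/
lemma deriv_nonpos_left {f : ℝ → ℝ} {a b d : ℝ} (hab : a < b)
    (hd : HasDerivAt f d b) (h0 : f b = 0) (hpos : ∀ x ∈ Set.Ioo a b, 0 < f x) :
    d ≤ 0 := by
  have hs : Tendsto (slope f b) (𝓝[<] b) (𝓝 d) :=
    (hasDerivAt_iff_tendsto_slope.mp hd).mono_left
      (nhdsWithin_mono _ (fun x hx => ne_of_lt hx))
  refine le_of_tendsto hs ?_
  filter_upwards [Ioo_mem_nhdsLT_of_mem (⟨hab, le_refl _⟩ : b ∈ Set.Ioc a b)] with x hx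
  rw [slope_def_field, h0, sub_zero]
  exact le_of_lt (div_neg_of_pos_of_neg (hpos x hx) (by linarith [hx.2]))

/-- a continuous nonvanishing function on an interval has constant sign -/
lemma exists_sign {f : ℝ → ℝ} {a b : ℝ}
    (hc : ∀ x ∈ Set.Ioo a b, ContinuousAt f x)
    (hne : ∀ x ∈ Set.Ioo a b, f x ≠ 0) :
    ∃ σ : ℝ, (σ = 1 ∨ σ = -1) ∧ ∀ x ∈ Set.Ioo a b, 0 < σ * f x := by
  by_cases hp : ∀ x ∈ Set.Ioo a b, 0 < f x
  · exact ⟨1, Or.inl rfl, fun x hx => by simpa using hp x hx⟩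
  by_cases hm : ∀ x ∈ Set.Ioo a b, f x < 0
  · exact ⟨-1, Or.inr rfl, fun x hx => by simpa using hm x hx⟩
  exfalso
  push_neg at hp hm
  obtain ⟨x, hx, hfx⟩ := hp
  obtain ⟨y, hy, hfy⟩ := hm
  have hfx' : f x < 0 := lt_of_le_of_ne hfx (hne x hx)
  have hfy' : 0 < f y := lt_of_le_of_ne (hfy) (Ne.symm (hne y hy))
  rcases lt_trichotomy x y with hxy | rfl | hxy
  · have hsub : Set.Icc x y ⊆ Set.Ioo a b := fun t ht => ⟨lt_of_lt_of_le hx.1 ht.1, lt_of_le_of_lt ht.2 hy.2⟩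
    have := intermediate_value_Ioo (le_of_lt hxy)
      (fun t ht => (hc t (hsub ht)).continuousWithinAt)
    obtain ⟨z, hz, hz0⟩ := this (show (0:ℝ) ∈ Set.Ioo (f x) (f y) from ⟨hfx', hfy'⟩)
    exact hne z (hsub (Set.Ioo_subset_Icc_self hz)) hz0
  · linarith
  · have hsub : Set.Icc y x ⊆ Set.Ioo a b := fun t ht => ⟨lt_of_lt_of_le hy.1 ht.1, lt_of_le_of_lt ht.2 hx.2⟩
    have := intermediate_value_Ioo' (le_of_lt hxy)
      (fun t ht => (hc t (hsub ht)).continuousWithinAt)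
    obtain ⟨z, hz, hz0⟩ := this (show (0:ℝ) ∈ Set.Ioo (f x) (f y) from ⟨hfx', hfy'⟩)
    exact hne z (hsub (Set.Ioo_subset_Icc_self hz)) hz0

/-- Wronskian derivative -/
lemma wronskian_deriv {V : ℝ → ℝ} {ℓ E₁ E₂ : ℝ} {ψ₁ ψ₂ : ℝ → ℝ}
    (h₁ : IsRegularSolution V ℓ E₁ ψ₁) (h₂ : IsRegularSolution V ℓ E₂ ψ₂)
    {r : ℝ} (hr : (0:ℝ) < r) :
    HasDerivAt (fun t => ψ₁ t * deriv ψ₂ t - deriv ψ₁ t * ψ₂ t)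
      ((E₁ - E₂) * (ψ₁ r * ψ₂ r)) r := by
  have d1 := (h₁.1 r hr).1.hasDerivAt
  have d1' := (h₁.1 r hr).2.hasDerivAt
  have d2 := (h₂.1 r hr).1.hasDerivAt
  have d2' := (h₂.1 r hr).2.hasDerivAt
  have e1 := h₁.2.1 r hr
  have e2 := h₂.2.1 r hr
  have H := (d1.mul d2').sub (d1'.mul d2)
  refine H.congr_deriv (Eq.symm ?_)
  linear_combination (- ψ₁ r) * e2 + (ψ₂ r) * e1

/-- Sturm comparison step: between consecutive zeros of `ψ₁` (or before its first
zero), `ψ₂` must vanish. -/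
lemma sturm_step {V : ℝ → ℝ} {ℓ E₁ E₂ : ℝ} (hV : ContinuousOn V (Set.Ioi 0)) (hℓ : 0 ≤ ℓ)
    (hE : E₁ < E₂) {ψ₁ ψ₂ : ℝ → ℝ}
    (h₁ : IsRegularSolution V ℓ E₁ ψ₁) (h₂ : IsRegularSolution V ℓ E₂ ψ₂)
    {a b : ℝ} (ha : 0 ≤ a) (hab : a < b)
    (hcase : a = 0 ∨ ψ₁ a = 0) (hb0 : ψ₁ b = 0)
    (hne : ∀ x ∈ Set.Ioo a b, ψ₁ x ≠ 0) :
    ∃ x ∈ Set.Ioo a b, ψ₂ x = 0 := by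
  by_contra hcon
  push_neg at hcon
  have hsubI : Set.Ioo a b ⊆ Set.Ioi (0:ℝ) := fun x hx => lt_of_le_of_lt ha hx.1
  have hbpos : (0:ℝ) < b := lt_of_le_of_lt ha hab
  obtain ⟨σ₁, hσ₁, hpos₁⟩ := exists_sign (fun x hx => ((h₁.1 x (hsubI hx)).1).continuousAt) hne
  obtain ⟨σ₂, hσ₂, hpos₂⟩ := exists_sign (fun x hx => ((h₂.1 x (hsubI hx)).1).continuousAt) hcon
  set W : ℝ → ℝ := fun t => σ₁ * σ₂ * (ψ₁ t * deriv ψ₂ t - deriv ψ₁ t * ψ₂ t) with hWdef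
  have hWd : ∀ r, (0:ℝ) < r → HasDerivAt W (σ₁ * σ₂ * ((E₁ - E₂) * (ψ₁ r * ψ₂ r))) r :=
    fun r hr => (wronskian_deriv h₁ h₂ hr).const_mul _
  have hWneg : ∀ r ∈ Set.Ioo a b, deriv W r < 0 := by
    intro r hr
    rw [(hWd r (hsubI hr)).deriv]
    have H1 := hpos₁ r hr
    have H2 := hpos₂ r hr
    nlinarith [mul_neg_of_neg_of_pos (by linarith : E₁ - E₂ < 0) (mul_pos H1 H2)]
  have hd1b : σ₁ * deriv ψ₁ b ≤ 0 :=
    deriv_nonpos_left hab (((h₁.1 b hbpos).1).hasDerivAt.const_mul σ₁)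
      (by rw [hb0]; ring) hpos₁
  have hψ₂b : 0 ≤ σ₂ * ψ₂ b := by
    have hcont : ContinuousAt (fun x => σ₂ * ψ₂ x) b :=
      continuousAt_const.mul (h₂.1 b hbpos).1.continuousAt
    have ht : Tendsto (fun x => σ₂ * ψ₂ x) (𝓝[<] b) (𝓝 (σ₂ * ψ₂ b)) :=
      hcont.tendsto.mono_left nhdsWithin_le_nhds
    refine ge_of_tendsto ht ?_
    filter_upwards [Ioo_mem_nhdsLT_of_mem (⟨hab, le_refl b⟩ : b ∈ Set.Ioc a b)] with x hx
    exact le_of_lt (hpos₂ x hx)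
  have hWb : 0 ≤ W b := by
    have hWbeq : W b = -((σ₁ * deriv ψ₁ b) * (σ₂ * ψ₂ b)) := by
      simp only [hWdef, hb0]; ring
    rw [hWbeq]; nlinarith
  have hanti : ∀ r s, a < r → r < s → s ≤ b → W s < W r := by
    intro r s har hrs hsb
    have hr0 : (0:ℝ) < r := lt_of_le_of_lt ha har
    have hcont : ContinuousOn W (Set.Icc r s) := fun x hx =>
      ((hWd x (lt_of_lt_of_le hr0 hx.1)).continuousAt).continuousWithinAt
    have := strictAntiOn_of_deriv_neg (convex_Icc r s) hcont (fun x hx => by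
      rw [interior_Icc] at hx
      exact hWneg x ⟨lt_trans har hx.1, lt_of_lt_of_le hx.2 hsb⟩)
    exact this ⟨le_refl r, le_of_lt hrs⟩ ⟨le_of_lt hrs, le_refl s⟩ hrs
  rcases eq_or_lt_of_le ha with rfl | hapos
  · -- a = 0
    obtain ⟨δ₁, hδ₁, hbd₁⟩ := reg_bounds h₁
    obtain ⟨δ₂, hδ₂, hbd₂⟩ := reg_bounds h₂
    have hs1 : σ₁ = 1 := by
      rcases hσ₁ with h | h
      · exact h
      exfalso
      have hm : (0:ℝ) < min δ₁ b := lt_min hδ₁ hbpos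
      have hr1 : min δ₁ b / 2 ∈ Set.Ioo (0:ℝ) b :=
        ⟨by positivity, by have := min_le_right δ₁ b; linarith⟩
      have hr2 : min δ₁ b / 2 ∈ Set.Ioo (0:ℝ) δ₁ :=
        ⟨by positivity, by have := min_le_left δ₁ b; linarith⟩
      have hp := hpos₁ _ hr1
      rw [h] at hp
      have := (hbd₁ _ hr2).1
      linarith
    have hs2 : σ₂ = 1 := by
      rcases hσ₂ with h | h
      · exact h
      exfalso
      have hm : (0:ℝ) < min δ₂ b := lt_min hδ₂ hbpos
      have hr1 : min δ₂ b / 2 ∈ Set.Ioo (0:ℝ) b :=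
        ⟨by positivity, by have := min_le_right δ₂ b; linarith⟩
      have hr2 : min δ₂ b / 2 ∈ Set.Ioo (0:ℝ) δ₂ :=
        ⟨by positivity, by have := min_le_left δ₂ b; linarith⟩
      have hp := hpos₂ _ hr1
      rw [h] at hp
      have := (hbd₂ _ hr2).1
      linarith
    subst hs1; subst hs2
    have hP₁ : ∀ x ∈ Set.Ioo (0:ℝ) b, 0 < ψ₁ x := by
      intro x hx; have := hpos₁ x hx; linarith
    -- choice of a'
    have hm0 : (0:ℝ) < min (min δ₁ 1) b := lt_min (lt_min hδ₁ one_pos) hbpos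
    set a' : ℝ := min (min δ₁ 1) b / 2 with ha'def
    have ha'0 : 0 < a' := by positivity
    have ha'b : a' < b := by
      have := min_le_right (min δ₁ 1) b; rw [ha'def]; linarith
    have ha'δ : a' < δ₁ := by
      have h1 := min_le_left (min δ₁ 1) b
      have h2 := min_le_left δ₁ 1
      rw [ha'def]; linarith
    have ha'1 : a' ≤ 1 := by
      have h1 := min_le_left (min δ₁ 1) b
      have h2 := min_le_right δ₁ 1
      rw [ha'def]; linarith
    have hδ₀ : 0 < W a' := lt_of_le_of_lt hWb (hanti a' b ha'0 ha'b (le_refl b))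
    set c : ℝ := W a' / 4 with hcdef
    have hc0 : 0 < c := by rw [hcdef]; positivity
    have hWlow : ∀ r ∈ Set.Ioo (0:ℝ) a', W a' ≤ W r :=
      fun r hr => le_of_lt (hanti r a' hr.1 hr.2 (le_of_lt ha'b))
    have hφd : ∀ r ∈ Set.Ioo (0:ℝ) b, HasDerivAt (fun t => ψ₂ t / ψ₁ t) (W r / ψ₁ r ^ 2) r := by
      intro r hr
      have H := ((h₂.1 r (hsubI hr)).1.hasDerivAt.div (h₁.1 r (hsubI hr)).1.hasDerivAt
        (ne_of_gt (hP₁ r hr)))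
      refine H.congr_deriv (Eq.symm ?_)
      simp only [hWdef]; ring
    set g : ℝ → ℝ := fun r => ψ₂ r / ψ₁ r - c * Real.log r with hgdef
    have hgd : ∀ r ∈ Set.Ioo (0:ℝ) b, HasDerivAt g (W r / ψ₁ r ^ 2 - c / r) r := by
      intro r hr
      have H := (hφd r hr).sub ((Real.hasDerivAt_log (ne_of_gt hr.1)).const_mul c)
      refine H.congr_deriv ?_ <;> ring
    have hgmono : MonotoneOn g (Set.Ioc 0 a') := by
      apply monotoneOn_of_deriv_nonneg (convex_Ioc 0 a')
      · intro r hr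
        have hrb : r ∈ Set.Ioo (0:ℝ) b := ⟨hr.1, lt_of_le_of_lt hr.2 ha'b⟩
        exact ((hgd r hrb).continuousAt).continuousWithinAt
      · rw [interior_Ioc]
        intro r hr
        exact ((hgd r ⟨hr.1, lt_trans hr.2 ha'b⟩).differentiableAt).differentiableWithinAt
      · rw [interior_Ioc]
        intro r hr
        have hrb : r ∈ Set.Ioo (0:ℝ) b := ⟨hr.1, lt_trans hr.2 ha'b⟩
        rw [(hgd r hrb).deriv]
        have hbd := hbd₁ r ⟨hr.1, lt_trans hr.2 ha'δ⟩
        have hr1 : r ≤ 1 := le_of_lt (lt_of_lt_of_le hr.2 ha'1)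
        have hrpow : r ^ (ℓ+1) * r ^ (ℓ+1) ≤ r := by
          rw [← Real.rpow_add hr.1]
          calc r ^ (ℓ+1+(ℓ+1)) ≤ r ^ (1:ℝ) :=
              Real.rpow_le_rpow_of_exponent_ge hr.1 hr1 (by linarith)
          _ = r := Real.rpow_one r
        have h2r : ψ₁ r ^ 2 ≤ 4 * r := by
          nlinarith [hbd.1, hbd.2, Real.rpow_pos_of_pos hr.1 (ℓ+1)]
        have hWr := hWlow r hr
        have hψsq : (0:ℝ) < ψ₁ r ^ 2 := by
          have := hP₁ r hrb; positivity
        rw [sub_nonneg, div_le_div_iff₀ hr.1 hψsq, hcdef]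
        nlinarith [mul_le_mul_of_nonneg_left h2r (le_of_lt (by positivity : (0:ℝ) < W a' / 4)),
          mul_le_mul_of_nonneg_right hWr (le_of_lt hr.1)]
    have hratio := reg_ratio h₁ h₂
    have hlogbot : Tendsto (fun r : ℝ => c * Real.log r) (𝓝[>] (0:ℝ)) atBot :=
      (Real.tendsto_log_nhdsGT_zero).const_mul_atBot hc0
    have hev1 : ∀ᶠ r in 𝓝[>] (0:ℝ), 0 < ψ₂ r / ψ₁ r :=
      hratio.eventually (eventually_gt_nhds (by norm_num : (0:ℝ) < 1))
    have hev2 : ∀ᶠ r in 𝓝[>] (0:ℝ), c * Real.log r < -(g a') - 1 :=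
      hlogbot.eventually (eventually_lt_atBot (-(g a') - 1))
    have hfalse : ∀ᶠ r in 𝓝[>] (0:ℝ), False := by
      filter_upwards [hev1, hev2,
        Ioo_mem_nhdsGT_of_mem (⟨le_refl _, ha'0⟩ : (0:ℝ) ∈ Set.Ico 0 a')]
        with r h1 h2 h3
      have hg := hgmono (⟨h3.1, le_of_lt h3.2⟩ : r ∈ Set.Ioc 0 a')
        (⟨ha'0, le_refl a'⟩ : a' ∈ Set.Ioc 0 a') (le_of_lt h3.2)
      simp only [hgdef] at hg h2
      linarith
    obtain ⟨r, hr⟩ := hfalse.exists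
    exact hr
  · -- a > 0
    have ha0 : ψ₁ a = 0 := hcase.resolve_left (ne_of_gt hapos)
    have hd1a : 0 ≤ σ₁ * deriv ψ₁ a :=
      deriv_nonneg_right hab (((h₁.1 a hapos).1).hasDerivAt.const_mul σ₁)
        (by rw [ha0]; ring) hpos₁
    have hψ₂a : 0 ≤ σ₂ * ψ₂ a := by
      have hcont : ContinuousAt (fun x => σ₂ * ψ₂ x) a :=
        continuousAt_const.mul (h₂.1 a hapos).1.continuousAt
      have ht : Tendsto (fun x => σ₂ * ψ₂ x) (𝓝[>] a) (𝓝 (σ₂ * ψ₂ a)) :=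
        hcont.tendsto.mono_left nhdsWithin_le_nhds
      refine ge_of_tendsto ht ?_
      filter_upwards [Ioo_mem_nhdsGT_of_mem (⟨le_refl a, hab⟩ : a ∈ Set.Ico a b)] with x hx
      exact le_of_lt (hpos₂ x hx)
    have hWa : W a ≤ 0 := by
      have hWaeq : W a = -((σ₁ * deriv ψ₁ a) * (σ₂ * ψ₂ a)) := by
        simp only [hWdef, ha0]; ring
      rw [hWaeq]; nlinarith
    have hWab : W b < W a := by
      have hcont : ContinuousOn W (Set.Icc a b) := fun x hx =>
        ((hWd x (lt_of_lt_of_le hapos hx.1)).continuousAt).continuousWithinAt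
      have := strictAntiOn_of_deriv_neg (convex_Icc a b) hcont (fun x hx => by
        rw [interior_Icc] at hx; exact hWneg x hx)
      exact this ⟨le_refl a, le_of_lt hab⟩ ⟨le_of_lt hab, le_refl b⟩ hab
    linarith

/-- the zero set of a regular solution in a bounded interval is finite -/
lemma zeros_finite {V : ℝ → ℝ} {ℓ E : ℝ} {ψ : ℝ → ℝ}
    (hV : ContinuousOn V (Set.Ioi 0)) (h : IsRegularSolution V ℓ E ψ) (b : ℝ) :
    {x ∈ Set.Ioo (0:ℝ) b | ψ x = 0}.Finite := by
  by_contra hinf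
  rw [← Set.not_infinite, not_not] at hinf
  obtain ⟨δ, hδ, hbd⟩ := reg_bounds h
  set S := {x ∈ Set.Ioo (0:ℝ) b | ψ x = 0} with hS
  have hsub : S ⊆ Set.Icc δ b := by
    rintro x ⟨hx, hx0⟩
    refine ⟨?_, le_of_lt hx.2⟩
    by_contra hcon
    push_neg at hcon
    exact absurd hx0 (ne_of_gt ((hbd x ⟨hx.1, hcon⟩).1))
  obtain ⟨x₀, hx₀K, hacc⟩ := hinf.exists_accPt_of_subset_isCompact isCompact_Icc hsub
  have hx₀ : (0:ℝ) < x₀ := lt_of_lt_of_le hδ hx₀K.1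
  have hNB : (𝓝[≠] x₀ ⊓ 𝓟 S).NeBot := hacc
  have hle : 𝓝[≠] x₀ ⊓ 𝓟 S ≤ 𝓝[≠] x₀ := inf_le_left
  have hSmem : S ∈ 𝓝[≠] x₀ ⊓ 𝓟 S := le_principal_iff.mp inf_le_right
  -- ψ x₀ = 0
  have hzero : ψ x₀ = 0 := by
    have h1 : Tendsto ψ (𝓝[≠] x₀ ⊓ 𝓟 S) (𝓝 (ψ x₀)) :=
      ((h.1 x₀ hx₀).1.continuousAt.tendsto).mono_left
        (le_trans hle nhdsWithin_le_nhds)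
    have h2 : Tendsto ψ (𝓝[≠] x₀ ⊓ 𝓟 S) (𝓝 0) := by
      refine Tendsto.congr' ?_ tendsto_const_nhds
      filter_upwards [hSmem] with x hx
      exact hx.2.symm
    exact tendsto_nhds_unique h1 h2
  -- deriv ψ x₀ = 0
  have hderiv : deriv ψ x₀ = 0 := by
    have h1 : Tendsto (slope ψ x₀) (𝓝[≠] x₀ ⊓ 𝓟 S) (𝓝 (deriv ψ x₀)) :=
      (hasDerivAt_iff_tendsto_slope.mp (h.1 x₀ hx₀).1.hasDerivAt).mono_left hle
    have h2 : Tendsto (slope ψ x₀) (𝓝[≠] x₀ ⊓ 𝓟 S) (𝓝 0) := by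
      refine Tendsto.congr' ?_ tendsto_const_nhds
      filter_upwards [hSmem] with x hx
      rw [slope_def_field, hx.2, hzero, sub_zero, zero_div]
    exact tendsto_nhds_unique h1 h2
  exact no_double_zero hV h hx₀ hzero hderiv

/-- `z` is the `n`-th zero of `f` on `(0,∞)`: `z > 0`, `f z = 0` and there are
exactly `n - 1` zeros of `f` in `(0, z)`. -/
def IsNthZero (f : ℝ → ℝ) (n : ℕ) (z : ℝ) : Prop :=
  0 < z ∧ f z = 0 ∧ {x ∈ Set.Ioo 0 z | f x = 0}.ncard = n - 1

/-- The zeros of the regular solution are strictly decreasing functions of the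
energy: if `E₁ < E₂` and the regular solution `ψ₁` at energy `E₁` has an `n`-th
zero `z₁`, then the regular solution `ψ₂` at energy `E₂` has at least `n` zeros
in `(0, z₁)`; in particular its `n`-th zero exists and is `< z₁`. -/
theorem nth_zero_strictAnti_in_energy
    (V : ℝ → ℝ) (hV : ContinuousOn V (Set.Ioi 0))
    (ℓ : ℝ) (hℓ : 0 ≤ ℓ)
    (E₁ E₂ : ℝ) (hE : E₁ < E₂)
    (ψ₁ ψ₂ : ℝ → ℝ)
    (h₁ : IsRegularSolution V ℓ E₁ ψ₁)
    (h₂ : IsRegularSolution V ℓ E₂ ψ₂)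
    (n : ℕ) (hn : 1 ≤ n)
    (z₁ : ℝ) (hz₁ : IsNthZero ψ₁ n z₁) :
    (∃ s : Finset ℝ, s.card = n ∧ ∀ x ∈ s, x ∈ Set.Ioo 0 z₁ ∧ ψ₂ x = 0) ∧
    ∃ z₂, IsNthZero ψ₂ n z₂ ∧ z₂ < z₁ := by
  obtain ⟨hz₁pos, hz₁zero, hz₁card⟩ := hz₁
  have hfin₁ : {x ∈ Set.Ioo (0:ℝ) z₁ | ψ₁ x = 0}.Finite := zeros_finite hV h₁ z₁
  set T : Finset ℝ := hfin₁.toFinset ∪ {z₁} with hTdef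
  have hz₁notin : z₁ ∉ hfin₁.toFinset := by
    rw [Set.Finite.mem_toFinset]
    rintro ⟨⟨_, h⟩, _⟩
    exact lt_irrefl z₁ h
  have hTcard : T.card = n := by
    rw [hTdef, Finset.union_comm, Finset.card_union_of_disjoint (by simpa using hz₁notin),
      Finset.card_singleton, ← Set.ncard_eq_toFinset_card _ hfin₁, hz₁card]
    omega
  have hTmem : ∀ x, x ∈ T ↔ ((x ∈ Set.Ioo (0:ℝ) z₁ ∧ ψ₁ x = 0) ∨ x = z₁) := by
    intro x
    simp [hTdef, Set.Finite.mem_toFinset]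
    exact Or.comm
  have hTfacts : ∀ x ∈ T, 0 < x ∧ x ≤ z₁ ∧ ψ₁ x = 0 := by
    intro x hx
    rcases (hTmem x).mp hx with ⟨hx1, hx2⟩ | rfl
    · exact ⟨hx1.1, le_of_lt hx1.2, hx2⟩
    · exact ⟨hz₁pos, le_refl _, hz₁zero⟩
  set e := T.orderIsoOfFin hTcard with hedef
  set A : Fin n → ℝ := fun i => (e i : ℝ) with hAdef
  have hAmem : ∀ i, A i ∈ T := fun i => (e i).2
  have hAmono : StrictMono A := fun i j hij => by
    rw [hAdef]
    exact_mod_cast (e.lt_iff_lt.mpr hij)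
  have hAsurj : ∀ x ∈ T, ∃ i, A i = x := by
    intro x hx
    obtain ⟨i, hi⟩ := e.surjective ⟨x, hx⟩
    exact ⟨i, by simp [hAdef, hi]⟩
  -- lower endpoints of the gaps
  set L : Fin n → ℝ := fun i => if h : i.1 = 0 then 0 else A ⟨i.1 - 1, by omega⟩ with hLdef
  have hL0 : ∀ i, 0 ≤ L i := by
    intro i
    simp only [hLdef]
    split_ifs
    · exact le_refl 0
    · exact le_of_lt (hTfacts _ (hAmem _)).1
  have hLlt : ∀ i, L i < A i := by
    intro i
    simp only [hLdef]
    split_ifs with h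
    · exact (hTfacts _ (hAmem i)).1
    · exact hAmono (by simp [Fin.lt_def]; omega)
  have hLcase : ∀ i, L i = 0 ∨ ψ₁ (L i) = 0 := by
    intro i
    simp only [hLdef]
    split_ifs
    · exact Or.inl rfl
    · exact Or.inr (hTfacts _ (hAmem _)).2.2
  have hnogap : ∀ i, ∀ x ∈ Set.Ioo (L i) (A i), ψ₁ x ≠ 0 := by
    intro i x hx hx0
    have hxpos : 0 < x := lt_of_le_of_lt (hL0 i) hx.1
    have hxz : x ≤ z₁ := le_of_lt (lt_of_lt_of_le hx.2 (hTfacts _ (hAmem i)).2.1)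
    have hxT : x ∈ T := by
      rcases eq_or_lt_of_le hxz with rfl | hlt
      · exact (hTmem x).mpr (Or.inr rfl)
      · exact (hTmem x).mpr (Or.inl ⟨⟨hxpos, hlt⟩, hx0⟩)
    obtain ⟨j, rfl⟩ := hAsurj x hxT
    have hji : j < i := hAmono.lt_iff_lt.mp hx.2
    have hine : i.1 ≠ 0 := by
      intro h0
      rw [Fin.lt_def, h0] at hji
      omega
    have : A j ≤ L i := by
      simp only [hLdef]
      rw [dif_neg hine]
      refine hAmono.monotone ?_
      rw [Fin.le_def]
      simp
      rw [Fin.lt_def] at hji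
      omega
    linarith [hx.1]
  -- apply Sturm to each gap
  have hstep : ∀ i : Fin n, ∃ x ∈ Set.Ioo (L i) (A i), ψ₂ x = 0 := by
    intro i
    refine sturm_step hV hℓ hE h₁ h₂ (hL0 i) (hLlt i) ?_ (hTfacts _ (hAmem i)).2.2 (hnogap i)
    exact hLcase i
  choose x hx1 hx2 using hstep
  have hxmono : StrictMono x := by
    intro i j hij
    have hjne : j.1 ≠ 0 := by
      rw [Fin.lt_def] at hij; omega
    have hAiLj : A i ≤ L j := by
      simp only [hLdef]
      rw [dif_neg hjne]
      refine hAmono.monotone ?_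
      rw [Fin.le_def]
      simp
      rw [Fin.lt_def] at hij
      omega
    calc x i < A i := (hx1 i).2
    _ ≤ L j := hAiLj
    _ < x j := (hx1 j).1
  have hxmem : ∀ i, x i ∈ Set.Ioo (0:ℝ) z₁ := by
    intro i
    exact ⟨lt_of_le_of_lt (hL0 i) (hx1 i).1,
      lt_of_lt_of_le (hx1 i).2 (hTfacts _ (hAmem i)).2.1⟩
  have hfirst : ∃ s : Finset ℝ, s.card = n ∧ ∀ y ∈ s, y ∈ Set.Ioo 0 z₁ ∧ ψ₂ y = 0 := by
    refine ⟨Finset.image x Finset.univ, ?_, ?_⟩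
    · rw [Finset.card_image_of_injective _ hxmono.injective, Finset.card_univ, Fintype.card_fin]
    · intro y hy
      rw [Finset.mem_image] at hy
      obtain ⟨i, _, rfl⟩ := hy
      exact ⟨hxmem i, hx2 i⟩
  refine ⟨hfirst, ?_⟩
  -- second part
  obtain ⟨s, hscard, hsmem⟩ := hfirst
  have hfin₂ : {y ∈ Set.Ioo (0:ℝ) z₁ | ψ₂ y = 0}.Finite := zeros_finite hV h₂ z₁
  set T₂ : Finset ℝ := hfin₂.toFinset with hT₂def
  have hssub : s ⊆ T₂ := by
    intro y hy
    rw [hT₂def, Set.Finite.mem_toFinset]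
    exact ⟨(hsmem y hy).1, (hsmem y hy).2⟩
  have hNle : n ≤ T₂.card := hscard ▸ Finset.card_le_card hssub
  set N := T₂.card with hNdef
  set f := T₂.orderIsoOfFin rfl with hfdef
  set B : Fin N → ℝ := fun i => (f i : ℝ) with hBdef
  have hBmem : ∀ i, B i ∈ T₂ := fun i => (f i).2
  have hBmono : StrictMono B := fun i j hij => by
    rw [hBdef]
    exact_mod_cast (f.lt_iff_lt.mpr hij)
  have hBsurj : ∀ y ∈ T₂, ∃ i, B i = y := by
    intro y hy
    obtain ⟨i, hi⟩ := f.surjective ⟨y, hy⟩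
    exact ⟨i, by simp [hBdef, hi]⟩
  have hT₂facts : ∀ y ∈ T₂, y ∈ Set.Ioo (0:ℝ) z₁ ∧ ψ₂ y = 0 := by
    intro y hy
    rw [hT₂def, Set.Finite.mem_toFinset] at hy
    exact hy
  have hi₀ : n - 1 < N := by omega
  set i₀ : Fin N := ⟨n - 1, hi₀⟩ with hi₀def
  set z₂ := B i₀ with hz₂def
  have hz₂mem := hT₂facts _ (hBmem i₀)
  refine ⟨z₂, ⟨hz₂mem.1.1, hz₂mem.2, ?_⟩, hz₂mem.1.2⟩
  have hseteq : {y ∈ Set.Ioo (0:ℝ) z₂ | ψ₂ y = 0} = B '' (Set.Iio i₀) := by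
    ext y
    constructor
    · rintro ⟨hy1, hy2⟩
      have hyT₂ : y ∈ T₂ := by
        rw [hT₂def, Set.Finite.mem_toFinset]
        exact ⟨⟨hy1.1, lt_trans hy1.2 hz₂mem.1.2⟩, hy2⟩
      obtain ⟨j, rfl⟩ := hBsurj y hyT₂
      exact ⟨j, hBmono.lt_iff_lt.mp hy1.2, rfl⟩
    · rintro ⟨j, hj, rfl⟩
      have hjm := hT₂facts _ (hBmem j)
      exact ⟨⟨hjm.1.1, hBmono hj⟩, hjm.2⟩
  rw [hseteq, Set.ncard_image_of_injective _ hBmono.injective]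
  have : Set.Iio i₀ = ↑(Finset.Iio i₀) := by simp
  rw [this, Set.ncard_coe_finset, Fin.card_Iio]
end

section
/- Let V : (0,∞) → ℝ be continuous, let E ∈ ℝ be a fixed energy, and let 0 ≤ ℓ₁ < ℓ₂ be two real angular momentum parameters. Let ψ₁ and ψ₂ be regular solutions of the radial Schrödinger equation with potential V, energy E, and angular momenta ℓ₁ and ℓ₂ respectively. If ψ₂ possesses an n-th zero z_n(ℓ₂) ∈ (0,∞) for some n ≥ 1, then ψ₁ has at least n zeros in the open interval (0, z_n(ℓ₂)); in particular the n-th zero z_n(ℓ₁) of ψ₁ exists and satisfies z_n(ℓ₁) < z_n(ℓ₂), i.e. every zero of the regular solution is a strictly increasing function of the angular momentum ℓ. -/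
open Set Filter Topology

namespace SturmAux

/-- Bundled hypotheses: `ψ'' = -(Q ψ)` on `(0,∞)` with the needed differentiability. -/
structure Sol (Q ψ : ℝ → ℝ) : Prop where
  d1 : ∀ r ∈ Set.Ioi (0:ℝ), HasDerivAt ψ (deriv ψ r) r
  d2 : ∀ r ∈ Set.Ioi (0:ℝ), HasDerivAt (deriv ψ) (deriv (deriv ψ) r) r
  eq : ∀ r ∈ Set.Ioi (0:ℝ), deriv (deriv ψ) r = -(Q r * ψ r)

lemma Sol.neg {Q ψ : ℝ → ℝ} (S : Sol Q ψ) : Sol Q (fun r => -ψ r) := by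
  have hd : (deriv fun r => -ψ r) = fun r => -deriv ψ r := funext fun r => deriv.neg
  have hd2 : (deriv fun r => -deriv ψ r) = fun r => -deriv (deriv ψ) r :=
    funext fun r => deriv.neg
  refine ⟨?_, ?_, ?_⟩
  · intro r hr; rw [hd]; exact (S.d1 r hr).neg
  · intro r hr; rw [hd, hd2]; exact (S.d2 r hr).neg
  · intro r hr; rw [hd, hd2]
    show -deriv (deriv ψ) r = _
    rw [S.eq r hr]; ring

lemma Sol.contOn {Q ψ : ℝ → ℝ} (S : Sol Q ψ) {s : Set ℝ} (hs : s ⊆ Set.Ioi 0) :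
    ContinuousOn ψ s :=
  fun x hx => ((S.d1 x (hs hx)).continuousAt).continuousWithinAt

/-- Derivative of the Wronskian `f g' - f' g`. -/
lemma wronskian_hasDerivAt {f g Q₁ Q₂ : ℝ → ℝ} (Sf : Sol Q₁ f) (Sg : Sol Q₂ g)
    {r : ℝ} (hr : r ∈ Set.Ioi (0:ℝ)) :
    HasDerivAt (fun y => f y * deriv g y - deriv f y * g y)
      ((Q₁ r - Q₂ r) * (f r * g r)) r := by
  have h := ((Sf.d1 r hr).mul (Sg.d2 r hr)).sub ((Sf.d2 r hr).mul (Sg.d1 r hr))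
  refine h.congr_deriv ?_
  rw [Sf.eq r hr, Sg.eq r hr]; ring

lemma deriv_nonneg_right {g : ℝ → ℝ} {a b : ℝ} (hab : a < b)
    (hg : HasDerivAt g (deriv g a) a) (hga : g a = 0)
    (hpos : ∀ x ∈ Set.Ioo a b, 0 < g x) : 0 ≤ deriv g a := by
  have hs : Tendsto (slope g a) (𝓝[>] a) (𝓝 (deriv g a)) :=
    (hasDerivAt_iff_tendsto_slope.1 hg).mono_left
      (nhdsWithin_mono _ fun x hx => ne_of_gt hx)
  refine ge_of_tendsto hs ?_
  filter_upwards [Ioo_mem_nhdsGT hab] with x hx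
  have : slope g a x = g x / (x - a) := by
    rw [slope_def_field, hga, sub_zero]
  rw [this]
  exact div_nonneg (hpos x hx).le (by linarith [hx.1])

lemma deriv_nonpos_left {g : ℝ → ℝ} {a b : ℝ} (hab : a < b)
    (hg : HasDerivAt g (deriv g b) b) (hgb : g b = 0)
    (hpos : ∀ x ∈ Set.Ioo a b, 0 < g x) : deriv g b ≤ 0 := by
  have hs : Tendsto (slope g b) (𝓝[<] b) (𝓝 (deriv g b)) :=
    (hasDerivAt_iff_tendsto_slope.1 hg).mono_left
      (nhdsWithin_mono _ fun x hx => ne_of_lt hx)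
  refine le_of_tendsto hs ?_
  filter_upwards [Ioo_mem_nhdsLT hab] with x hx
  have : slope g b x = g x / (x - b) := by
    rw [slope_def_field, hgb, sub_zero]
  rw [this]
  exact div_nonpos_of_nonneg_of_nonpos (hpos x hx).le (by linarith [hx.2])

lemma val_nonneg_right {f : ℝ → ℝ} {a b : ℝ} (hab : a < b)
    (hc : ContinuousAt f a) (hpos : ∀ x ∈ Set.Ioo a b, 0 < f x) : 0 ≤ f a := by
  refine ge_of_tendsto (hc.continuousWithinAt (s := Set.Ioi a)) ?_
  filter_upwards [Ioo_mem_nhdsGT hab] with x hx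
  exact (hpos x hx).le

lemma val_nonneg_left {f : ℝ → ℝ} {a b : ℝ} (hab : a < b)
    (hc : ContinuousAt f b) (hpos : ∀ x ∈ Set.Ioo a b, 0 < f x) : 0 ≤ f b := by
  refine ge_of_tendsto (hc.continuousWithinAt (s := Set.Iio b)) ?_
  filter_upwards [Ioo_mem_nhdsLT hab] with x hx
  exact (hpos x hx).le

/-- Core Sturm comparison on an interior interval, positive-sign case. -/
lemma sturm_core {f g Q₁ Q₂ : ℝ → ℝ} {a b : ℝ} (ha : 0 < a) (hab : a < b)
    (Sf : Sol Q₁ f) (Sg : Sol Q₂ g)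
    (hQ : ∀ r ∈ Set.Ioo a b, Q₂ r < Q₁ r)
    (hfpos : ∀ x ∈ Set.Ioo a b, 0 < f x) (hgpos : ∀ x ∈ Set.Ioo a b, 0 < g x)
    (hga : g a = 0) (hgb : g b = 0) : False := by
  set W : ℝ → ℝ := fun y => f y * deriv g y - deriv f y * g y with hW
  have hsub : Set.Icc a b ⊆ Set.Ioi 0 := fun x hx => lt_of_lt_of_le ha hx.1
  have hWd : ∀ r ∈ Set.Icc a b, HasDerivAt W ((Q₁ r - Q₂ r) * (f r * g r)) r :=
    fun r hr => wronskian_hasDerivAt Sf Sg (hsub hr)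
  have hmono : StrictMonoOn W (Set.Icc a b) := by
    apply strictMonoOn_of_deriv_pos (convex_Icc a b)
    · exact fun x hx => ((hWd x hx).continuousAt).continuousWithinAt
    · intro x hx
      rw [interior_Icc] at hx
      rw [(hWd x (Set.Ioo_subset_Icc_self hx)).deriv]
      exact mul_pos (sub_pos.2 (hQ x hx)) (mul_pos (hfpos x hx) (hgpos x hx))
  have haI : a ∈ Set.Ioi (0:ℝ) := ha
  have hbI : b ∈ Set.Ioi (0:ℝ) := lt_trans ha hab
  have hWa : 0 ≤ W a := by
    have hfa : 0 ≤ f a := val_nonneg_right hab (Sf.d1 a haI).continuousAt hfpos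
    have hga' : 0 ≤ deriv g a := deriv_nonneg_right hab (Sg.d1 a haI) hga hgpos
    simp only [hW, hga, mul_zero, sub_zero]
    exact mul_nonneg hfa hga'
  have hWb : W b ≤ 0 := by
    have hfb : 0 ≤ f b := val_nonneg_left hab (Sf.d1 b hbI).continuousAt hfpos
    have hgb' : deriv g b ≤ 0 := deriv_nonpos_left hab (Sg.d1 b hbI) hgb hgpos
    simp only [hW, hgb, mul_zero, sub_zero]
    exact mul_nonpos_of_nonneg_of_nonpos hfb hgb'
  have := hmono (Set.left_mem_Icc.2 hab.le) (Set.right_mem_Icc.2 hab.le) hab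
  linarith

lemma sign_const {f : ℝ → ℝ} {a b x₀ : ℝ} (hcont : ContinuousOn f (Set.Ioo a b))
    (hne : ∀ x ∈ Set.Ioo a b, f x ≠ 0) (hx₀ : x₀ ∈ Set.Ioo a b) (h0 : 0 < f x₀) :
    ∀ x ∈ Set.Ioo a b, 0 < f x := by
  intro x hx
  rcases lt_trichotomy (f x) 0 with hneg | hzero | hposx
  · exfalso
    have hsubset : Set.uIcc x x₀ ⊆ Set.Ioo a b :=
      (Set.ordConnected_Ioo).uIcc_subset hx hx₀
    have := intermediate_value_uIcc (hcont.mono hsubset)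
    have h0mem : (0:ℝ) ∈ Set.uIcc (f x) (f x₀) :=
      Set.mem_uIcc.2 (Or.inl ⟨hneg.le, h0.le⟩)
    obtain ⟨z, hz, hfz⟩ := this h0mem
    exact hne z (hsubset hz) hfz
  · exact absurd hzero (hne x hx)
  · exact hposx

/-- Sturm comparison on an interior interval. -/
lemma sturm_interior {f g Q₁ Q₂ : ℝ → ℝ} {a b : ℝ} (ha : 0 < a) (hab : a < b)
    (Sf : Sol Q₁ f) (Sg : Sol Q₂ g)
    (hQ : ∀ r ∈ Set.Ioo a b, Q₂ r < Q₁ r)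
    (hga : g a = 0) (hgb : g b = 0) (hgne : ∀ x ∈ Set.Ioo a b, g x ≠ 0) :
    ∃ x ∈ Set.Ioo a b, f x = 0 := by
  by_contra hcon
  push_neg at hcon
  have hIoosub : Set.Ioo a b ⊆ Set.Ioi 0 := fun x hx => lt_trans ha hx.1
  have hm : (a + b) / 2 ∈ Set.Ioo a b := ⟨by linarith, by linarith⟩
  have key : ∀ F G : ℝ → ℝ, Sol Q₁ F → Sol Q₂ G →
      (∀ x ∈ Set.Ioo a b, F x ≠ 0) → 0 < F ((a+b)/2) →
      (∀ x ∈ Set.Ioo a b, G x ≠ 0) → 0 < G ((a+b)/2) →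
      G a = 0 → G b = 0 → False := by
    intro F G SF SG hFne hF0 hGne hG0 hGa hGb
    have hFpos := sign_const (SF.contOn hIoosub) hFne hm hF0
    have hGpos := sign_const (SG.contOn hIoosub) hGne hm hG0
    exact sturm_core ha hab SF SG hQ hFpos hGpos hGa hGb
  have hfne : ∀ x ∈ Set.Ioo a b, f x ≠ 0 := hcon
  rcases (hfne _ hm).lt_or_gt with hf | hf <;> rcases (hgne _ hm).lt_or_gt with hg | hg
  · exact key (fun r => -f r) (fun r => -g r) Sf.neg Sg.neg
      (fun x hx => neg_ne_zero.2 (hfne x hx)) (by linarith)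
      (fun x hx => neg_ne_zero.2 (hgne x hx)) (by linarith)
      (by simp [hga]) (by simp [hgb])
  · exact key (fun r => -f r) g Sf.neg Sg
      (fun x hx => neg_ne_zero.2 (hfne x hx)) (by linarith) hgne hg hga hgb
  · exact key f (fun r => -g r) Sf Sg.neg hfne hf
      (fun x hx => neg_ne_zero.2 (hgne x hx)) (by linarith)
      (by simp [hga]) (by simp [hgb])
  · exact key f g Sf Sg hfne hf hgne hg hga hgb

/-- Sturm comparison on the first interval `(0, b)`, using the boundary
behaviour at `0` through the limit of the ratio `g/f`. -/
lemma sturm_first {f g Q₁ Q₂ : ℝ → ℝ} {b : ℝ} (hb : 0 < b)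
    (Sf : Sol Q₁ f) (Sg : Sol Q₂ g)
    (hQ : ∀ r ∈ Set.Ioo 0 b, Q₂ r < Q₁ r)
    (hfpos : ∀ x ∈ Set.Ioo 0 b, 0 < f x) (hgpos : ∀ x ∈ Set.Ioo 0 b, 0 < g x)
    (hgb : g b = 0)
    (hratio : Tendsto (fun r => g r / f r) (𝓝[>] 0) (𝓝 0)) : False := by
  set W : ℝ → ℝ := fun y => f y * deriv g y - deriv f y * g y with hW
  have hsub : Set.Ioc (0:ℝ) b ⊆ Set.Ioi 0 := fun x hx => hx.1
  have hWd : ∀ r ∈ Set.Ioc (0:ℝ) b, HasDerivAt W ((Q₁ r - Q₂ r) * (f r * g r)) r :=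
    fun r hr => wronskian_hasDerivAt Sf Sg (hsub hr)
  have hmono : StrictMonoOn W (Set.Ioc 0 b) := by
    apply strictMonoOn_of_deriv_pos (convex_Ioc 0 b)
    · exact fun x hx => ((hWd x hx).continuousAt).continuousWithinAt
    · intro x hx
      rw [interior_Ioc] at hx
      rw [(hWd x (Set.Ioo_subset_Ioc_self hx)).deriv]
      exact mul_pos (sub_pos.2 (hQ x hx)) (mul_pos (hfpos x hx) (hgpos x hx))
  have hbI : b ∈ Set.Ioi (0:ℝ) := hb
  have hWb : W b ≤ 0 := by
    have hfb : 0 ≤ f b := val_nonneg_left hb (Sf.d1 b hbI).continuousAt hfpos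
    have hgb' : deriv g b ≤ 0 := deriv_nonpos_left hb (Sg.d1 b hbI) hgb hgpos
    simp only [hW, hgb, mul_zero, sub_zero]
    exact mul_nonpos_of_nonneg_of_nonpos hfb hgb'
  have hWneg : ∀ x ∈ Set.Ioo (0:ℝ) b, W x < 0 := by
    intro x hx
    have := hmono (Set.Ioo_subset_Ioc_self hx) (Set.right_mem_Ioc.2 hb) hx.2
    linarith
  set u : ℝ → ℝ := fun y => g y / f y with hu
  have hud : ∀ x ∈ Set.Ioo (0:ℝ) b, HasDerivAt u (W x / f x ^ 2) x := by
    intro x hx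
    have hx0 : x ∈ Set.Ioi (0:ℝ) := hx.1
    have h := (Sg.d1 x hx0).div (Sf.d1 x hx0) (hfpos x hx).ne'
    refine h.congr_deriv ?_
    simp only [hW]; ring
  have hanti : StrictAntiOn u (Set.Ioo 0 b) := by
    apply strictAntiOn_of_deriv_neg (convex_Ioo 0 b)
    · exact fun x hx => ((hud x hx).continuousAt).continuousWithinAt
    · intro x hx
      rw [interior_Ioo] at hx
      rw [(hud x hx).deriv]
      exact div_neg_of_neg_of_pos (hWneg x hx) (pow_pos (hfpos x hx) 2)
  have hx0 : b / 2 ∈ Set.Ioo (0:ℝ) b := ⟨by linarith, by linarith⟩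
  have hle : u (b/2) ≤ 0 := by
    refine ge_of_tendsto hratio ?_
    filter_upwards [Ioo_mem_nhdsGT (by linarith : (0:ℝ) < b/2)] with y hy
    exact (hanti ⟨hy.1, by linarith [hy.2]⟩ hx0 hy.2).le
  have : 0 < u (b/2) := div_pos (hgpos _ hx0) (hfpos _ hx0)
  linarith

/-- Gronwall-type estimate: a nonnegative function with `h' ≥ -C h` vanishing
at the right endpoint vanishes at the left endpoint. -/
lemma gronwall_zero {h h' : ℝ → ℝ} {a b C : ℝ} (hab : a ≤ b)
    (hd : ∀ x ∈ Set.Icc a b, HasDerivAt h (h' x) x)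
    (hpos : ∀ x ∈ Set.Icc a b, 0 ≤ h x)
    (hC : ∀ x ∈ Set.Icc a b, -(C * h x) ≤ h' x)
    (hb : h b = 0) : h a = 0 := by
  set φ : ℝ → ℝ := fun x => h x * Real.exp (C * x) with hφ
  have hφd : ∀ x ∈ Set.Icc a b,
      HasDerivAt φ ((h' x + C * h x) * Real.exp (C * x)) x := by
    intro x hx
    have h1 : HasDerivAt (fun y => Real.exp (C * y)) (Real.exp (C * x) * (C * 1)) x :=
      ((hasDerivAt_id x).const_mul C).exp
    have := (hd x hx).mul h1
    refine this.congr_deriv ?_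
    ring
  have hmono : MonotoneOn φ (Set.Icc a b) := by
    apply monotoneOn_of_deriv_nonneg (convex_Icc a b)
    · exact fun x hx => ((hφd x hx).continuousAt).continuousWithinAt
    · intro x hx
      rw [interior_Icc] at hx
      exact ((hφd x (Set.Ioo_subset_Icc_self hx)).differentiableAt).differentiableWithinAt
    · intro x hx
      rw [interior_Icc] at hx
      rw [(hφd x (Set.Ioo_subset_Icc_self hx)).deriv]
      have h1 := hC x (Set.Ioo_subset_Icc_self hx)
      have h2 := Real.exp_pos (C * x)
      nlinarith
  have hab' := hmono (Set.left_mem_Icc.2 hab) (Set.right_mem_Icc.2 hab) hab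
  have hφb : φ b = 0 := by simp [hφ, hb]
  have hea := Real.exp_pos (C * a)
  have h0 : 0 ≤ h a := hpos a (Set.left_mem_Icc.2 hab)
  rw [hφb] at hab'
  simp only [hφ] at hab'
  have h1 : h a ≤ 0 := nonpos_of_mul_nonpos_right ?_ hea
  · linarith
  · linarith

/-- A solution with a double zero at `p > 0` vanishes at every `a ∈ (0, p]`. -/
lemma zero_of_double_zero {ψ Q : ℝ → ℝ} {a p : ℝ} (ha : 0 < a) (hap : a ≤ p)
    (S : Sol Q ψ) (hQ : ContinuousOn Q (Set.Icc a p))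
    (hp : ψ p = 0) (hp' : deriv ψ p = 0) : ψ a = 0 := by
  obtain ⟨C₀, hC₀⟩ := (isCompact_Icc).exists_bound_of_continuousOn hQ
  set h : ℝ → ℝ := fun x => ψ x ^ 2 + deriv ψ x ^ 2 with hh
  set h' : ℝ → ℝ := fun x => 2 * ψ x * deriv ψ x + 2 * deriv ψ x * deriv (deriv ψ) x with hh'
  have hsub : Set.Icc a p ⊆ Set.Ioi 0 := fun x hx => lt_of_lt_of_le ha hx.1
  have hd : ∀ x ∈ Set.Icc a p, HasDerivAt h (h' x) x := by
    intro x hx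
    have := ((S.d1 x (hsub hx)).pow 2).add ((S.d2 x (hsub hx)).pow 2)
    refine this.congr_deriv ?_
    simp only [hh']; norm_num
  have hzero : h a = 0 := by
    apply gronwall_zero (C := 1 + C₀) hap hd
      (fun x _ => by positivity) ?_ (by simp [hh, hp, hp'])
    intro x hx
    have hq := hC₀ x hx
    rw [Real.norm_eq_abs] at hq
    have hq1 := abs_le.1 hq
    have heq : h' x = 2 * (1 - Q x) * (ψ x * deriv ψ x) := by
      rw [hh']
      simp only
      rw [S.eq x (hsub hx)]
      ring
    rw [heq, hh]
    simp only
    nlinarith [sq_nonneg (ψ x + deriv ψ x), sq_nonneg (ψ x - deriv ψ x), hq1.1, hq1.2]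
  have : ψ a ^ 2 ≤ 0 := by
    have := sq_nonneg (deriv ψ a)
    simp only [hh] at hzero
    nlinarith
  nlinarith [sq_nonneg (ψ a)]

/-- The zero set of a nontrivial solution in a bounded interval is finite. -/
lemma finite_zeros {ψ Q : ℝ → ℝ} (S : Sol Q ψ) (hQ : ContinuousOn Q (Set.Ioi 0))
    {ε : ℝ} (hε : 0 < ε) (hpos : ∀ x ∈ Set.Ioo 0 ε, 0 < ψ x) (b : ℝ) :
    {x | x ∈ Set.Ioo 0 b ∧ ψ x = 0}.Finite := by
  by_contra hinf
  set Z := {x | x ∈ Set.Ioo 0 b ∧ ψ x = 0} with hZ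
  have hinf' : Z.Infinite := hinf
  have hZsub : Z ⊆ Set.Icc ε b := by
    intro x hx
    refine ⟨le_of_not_gt fun hlt => ?_, hx.1.2.le⟩
    exact (hpos x ⟨hx.1.1, hlt⟩).ne' hx.2
  obtain ⟨p, hpK, hacc⟩ := hinf'.exists_accPt_of_subset_isCompact isCompact_Icc hZsub
  have hp0 : (0:ℝ) < p := lt_of_lt_of_le hε hpK.1
  have hl : (𝓝[≠] p ⊓ 𝓟 Z).NeBot := hacc
  have hle : 𝓝[≠] p ⊓ 𝓟 Z ≤ 𝓝[≠] p := inf_le_left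
  have hZmem : Z ∈ 𝓝[≠] p ⊓ 𝓟 Z := le_def.1 inf_le_right Z (mem_principal_self Z)
  have hψp : ψ p = 0 := by
    have h1 : Tendsto ψ (𝓝[≠] p ⊓ 𝓟 Z) (𝓝 (ψ p)) :=
      ((S.d1 p hp0).continuousAt).tendsto.comp
        (hle.trans (nhdsWithin_le_nhds))
    have h2 : Tendsto ψ (𝓝[≠] p ⊓ 𝓟 Z) (𝓝 0) := by
      apply Tendsto.congr' _ tendsto_const_nhds
      filter_upwards [hZmem] with x hx
      exact hx.2.symm
    exact tendsto_nhds_unique h1 h2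
  have hψp' : deriv ψ p = 0 := by
    have h1 : Tendsto (slope ψ p) (𝓝[≠] p ⊓ 𝓟 Z) (𝓝 (deriv ψ p)) :=
      (hasDerivAt_iff_tendsto_slope.1 (S.d1 p hp0)).mono_left hle
    have h2 : Tendsto (slope ψ p) (𝓝[≠] p ⊓ 𝓟 Z) (𝓝 0) := by
      apply Tendsto.congr' _ tendsto_const_nhds
      filter_upwards [hZmem] with x hx
      rw [slope_def_field, hx.2, hψp, sub_zero, zero_div]
    exact tendsto_nhds_unique h1 h2
  have h0 : ψ (ε/2) = 0 := by
    apply zero_of_double_zero (half_pos hε) (by linarith [hpK.1]) S _ hψp hψp'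
    exact hQ.mono fun x hx => lt_of_lt_of_le (half_pos hε) hx.1
  exact (hpos (ε/2) ⟨half_pos hε, half_lt_self hε⟩).ne' h0

/-- Positivity near `0` from the boundary condition. -/
lemma pos_near {ψ : ℝ → ℝ} {c : ℝ}
    (h : Tendsto (fun r => ψ r / r ^ c) (𝓝[>] 0) (𝓝 1)) :
    ∃ ε > 0, ∀ x ∈ Set.Ioo (0:ℝ) ε, 0 < ψ x := by
  have h2 : ∀ᶠ r in 𝓝[>] (0:ℝ), 0 < ψ r / r ^ c :=
    h.eventually (eventually_gt_nhds one_pos)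
  have h3 : ∀ᶠ r in 𝓝[>] (0:ℝ), 0 < ψ r := by
    filter_upwards [h2, self_mem_nhdsWithin] with r h1 hr
    have hp : (0:ℝ) < r ^ c := Real.rpow_pos_of_pos hr c
    rcases div_pos_iff.1 h1 with ⟨hψ, _⟩ | ⟨_, hneg⟩
    · exact hψ
    · linarith
  rcases mem_nhdsGT_iff_exists_Ioo_subset.1 h3 with ⟨u, hu, hsub⟩
  exact ⟨u, hu, fun x hx => hsub hx⟩

/-- The ratio of the two regular solutions tends to `0` at the origin. -/
lemma ratio_tendsto {f g : ℝ → ℝ} {ℓ₁ ℓ₂ ε : ℝ} (hℓ : ℓ₁ < ℓ₂) (hε : 0 < ε)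
    (t₁ : Tendsto (fun r => f r / r ^ (ℓ₁ + 1)) (𝓝[>] 0) (𝓝 1))
    (t₂ : Tendsto (fun r => g r / r ^ (ℓ₂ + 1)) (𝓝[>] 0) (𝓝 1))
    (hf : ∀ x ∈ Set.Ioo (0:ℝ) ε, 0 < f x) :
    Tendsto (fun r => g r / f r) (𝓝[>] 0) (𝓝 0) := by
  have hpow : Tendsto (fun r : ℝ => r ^ (ℓ₂ - ℓ₁)) (𝓝[>] (0:ℝ)) (𝓝 0) := by
    have hc : ContinuousAt (fun r : ℝ => r ^ (ℓ₂ - ℓ₁)) 0 :=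
      Real.continuousAt_rpow_const 0 _ (Or.inr (by linarith))
    have h0 : (0:ℝ) ^ (ℓ₂ - ℓ₁) = 0 := Real.zero_rpow (by linarith)
    have := hc.tendsto.mono_left (nhdsWithin_le_nhds (s := Set.Ioi (0:ℝ)))
    rwa [h0] at this
  have t := (t₂.mul (t₁.inv₀ one_ne_zero)).mul hpow
  have hlim : (1 * 1⁻¹ * 0 : ℝ) = 0 := by norm_num
  rw [hlim] at t
  apply t.congr'
  filter_upwards [Ioo_mem_nhdsGT hε, self_mem_nhdsWithin] with r hr hr0
  have hr0' : (0:ℝ) < r := hr0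
  have hfr := hf r hr
  have hp1 : (0:ℝ) < r ^ (ℓ₁ + 1) := Real.rpow_pos_of_pos hr0' _
  have hp2 : (0:ℝ) < r ^ (ℓ₂ + 1) := Real.rpow_pos_of_pos hr0' _
  have hkey : r ^ (ℓ₁ + 1) * r ^ (ℓ₂ - ℓ₁) = r ^ (ℓ₂ + 1) := by
    rw [← Real.rpow_add hr0']
    ring_nf
  field_simp
  linear_combination g r * hkey

/-- Existence of the element of a finite set of reals with exactly `k`
smaller elements. -/
lemma nth_of_finite {S : Set ℝ} (hS : S.Finite) {k : ℕ} (hk : k < S.ncard) :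
    ∃ z ∈ S, {x ∈ S | x < z}.ncard = k := by
  classical
  have hcard : hS.toFinset.card = S.ncard := (Set.ncard_eq_toFinset_card S hS).symm
  set M := hS.toFinset with hM
  have hk' : k < M.card := by rw [hcard]; exact hk
  set e := M.orderIsoOfFin rfl with he
  set z : ℝ := (e ⟨k, hk'⟩ : ℝ) with hz
  have hzS : z ∈ S := by
    have := (e ⟨k, hk'⟩).2
    exact hS.mem_toFinset.1 this
  refine ⟨z, hzS, ?_⟩
  have hinj : Function.Injective (fun i : Fin M.card => (e i : ℝ)) := by
    intro i j hij
    exact e.injective (Subtype.ext hij)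
  have himg : M.filter (fun y => y < z) =
      (Finset.univ.filter fun i : Fin M.card => i < ⟨k, hk'⟩).image
        (fun i => (e i : ℝ)) := by
    ext y
    simp only [Finset.mem_filter, Finset.mem_image, Finset.mem_univ, true_and]
    constructor
    · rintro ⟨hyM, hlt⟩
      refine ⟨e.symm ⟨y, hyM⟩, ?_, by simp⟩
      have : e (e.symm ⟨y, hyM⟩) < e ⟨k, hk'⟩ := by
        rw [e.apply_symm_apply]
        exact Subtype.mk_lt_mk.2 hlt
      exact e.lt_iff_lt.1 this
    · rintro ⟨i, hi, rfl⟩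
      refine ⟨(e i).2, ?_⟩
      have := e.lt_iff_lt.2 hi
      exact this
  have hset : {x ∈ S | x < z} = ↑(M.filter fun y => y < z) := by
    ext x
    simp [hM, Set.Finite.mem_toFinset]
  rw [hset, Set.ncard_coe_finset, himg,
    Finset.card_image_of_injective _ hinj]
  have : (Finset.univ.filter fun i : Fin M.card => i < ⟨k, hk'⟩) =
      Finset.Iio (⟨k, hk'⟩ : Fin M.card) := by
    ext i; simp
  rw [this, Fin.card_Iio]

/-- Sturm comparison on the first interval, existence form. -/
lemma sturm_zero {f g Q₁ Q₂ : ℝ → ℝ} {b ε₁ ε₂ : ℝ} (hb : 0 < b)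
    (Sf : Sol Q₁ f) (Sg : Sol Q₂ g)
    (hQ : ∀ r ∈ Set.Ioo 0 b, Q₂ r < Q₁ r)
    (hε₁ : 0 < ε₁) (hf : ∀ x ∈ Set.Ioo (0:ℝ) ε₁, 0 < f x)
    (hε₂ : 0 < ε₂) (hg : ∀ x ∈ Set.Ioo (0:ℝ) ε₂, 0 < g x)
    (hgb : g b = 0) (hgne : ∀ x ∈ Set.Ioo 0 b, g x ≠ 0)
    (hratio : Tendsto (fun r => g r / f r) (𝓝[>] 0) (𝓝 0)) :
    ∃ x ∈ Set.Ioo 0 b, f x = 0 := by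
  by_contra hcon
  push_neg at hcon
  have hIoosub : Set.Ioo (0:ℝ) b ⊆ Set.Ioi 0 := fun x hx => hx.1
  have hmin₁ : (0:ℝ) < min b ε₁ := lt_min hb hε₁
  have hmin₂ : (0:ℝ) < min b ε₂ := lt_min hb hε₂
  have hw₁ : min b ε₁ / 2 ∈ Set.Ioo (0:ℝ) b :=
    ⟨by positivity, by have := min_le_left b ε₁; linarith⟩
  have hw₁' : min b ε₁ / 2 ∈ Set.Ioo (0:ℝ) ε₁ :=
    ⟨by positivity, by have := min_le_right b ε₁; linarith⟩
  have hw₂ : min b ε₂ / 2 ∈ Set.Ioo (0:ℝ) b :=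
    ⟨by positivity, by have := min_le_left b ε₂; linarith⟩
  have hw₂' : min b ε₂ / 2 ∈ Set.Ioo (0:ℝ) ε₂ :=
    ⟨by positivity, by have := min_le_right b ε₂; linarith⟩
  have hfpos := sign_const (Sf.contOn hIoosub) hcon hw₁ (hf _ hw₁')
  have hgpos := sign_const (Sg.contOn hIoosub) hgne hw₂ (hg _ hw₂')
  exact sturm_first hb Sf Sg hQ hfpos hgpos hgb hratio

lemma regular_sol {V : ℝ → ℝ} {ℓ E : ℝ} {ψ : ℝ → ℝ} (h : IsRegularSolution V ℓ E ψ) :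
    Sol (fun r => E - V r - ℓ * (ℓ + 1) / r ^ 2) ψ := by
  refine ⟨fun r hr => (h.1 r hr).1.hasDerivAt, fun r hr => (h.1 r hr).2.hasDerivAt, ?_⟩
  intro r hr
  have h0 := h.2.1 r hr
  show deriv (deriv ψ) r = -((E - V r - ℓ * (ℓ + 1) / r ^ 2) * ψ r)
  linarith

lemma Qcont {V : ℝ → ℝ} (hV : ContinuousOn V (Set.Ioi 0)) (E c : ℝ) :
    ContinuousOn (fun r => E - V r - c / r ^ 2) (Set.Ioi 0) := by
  apply ContinuousOn.sub
  · exact continuousOn_const.sub hV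
  · exact continuousOn_const.div ((continuous_pow 2).continuousOn)
      (fun x hx => pow_ne_zero 2 (ne_of_gt hx))

end SturmAux

/-- The zeros of the regular solution are strictly increasing functions of the
angular momentum: if `0 ≤ ℓ₁ < ℓ₂` and the regular solution `ψ₂` with angular
momentum `ℓ₂` has an `n`-th zero `z₂`, then the regular solution `ψ₁` with
angular momentum `ℓ₁` has at least `n` zeros in `(0, z₂)`; in particular its
`n`-th zero exists and is `< z₂`. -/
theorem nth_zero_strictMono_in_angular_momentum
    (V : ℝ → ℝ) (hV : ContinuousOn V (Set.Ioi 0))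
    (E : ℝ)
    (ℓ₁ ℓ₂ : ℝ) (hℓ₁ : 0 ≤ ℓ₁) (hℓ : ℓ₁ < ℓ₂)
    (ψ₁ ψ₂ : ℝ → ℝ)
    (h₁ : IsRegularSolution V ℓ₁ E ψ₁)
    (h₂ : IsRegularSolution V ℓ₂ E ψ₂)
    (n : ℕ) (hn : 1 ≤ n)
    (z₂ : ℝ) (hz₂ : IsNthZero ψ₂ n z₂) :
    (∃ s : Finset ℝ, s.card = n ∧ ∀ x ∈ s, x ∈ Set.Ioo 0 z₂ ∧ ψ₁ x = 0) ∧
    ∃ z₁, IsNthZero ψ₁ n z₁ ∧ z₁ < z₂ := by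
  classical
  obtain ⟨hz₂pos, hz₂zero, hz₂count⟩ := hz₂
  have S₁ := SturmAux.regular_sol h₁
  have S₂ := SturmAux.regular_sol h₂
  set Q₁ : ℝ → ℝ := fun r => E - V r - ℓ₁ * (ℓ₁ + 1) / r ^ 2 with hQ₁
  set Q₂ : ℝ → ℝ := fun r => E - V r - ℓ₂ * (ℓ₂ + 1) / r ^ 2 with hQ₂
  have hQ₁c : ContinuousOn Q₁ (Set.Ioi 0) := SturmAux.Qcont hV E _
  have hQ₂c : ContinuousOn Q₂ (Set.Ioi 0) := SturmAux.Qcont hV E _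
  have hQlt : ∀ r ∈ Set.Ioi (0:ℝ), Q₂ r < Q₁ r := by
    intro r hr
    have hr0 : (0:ℝ) < r := hr
    have hr2 : (0:ℝ) < r ^ 2 := by positivity
    have h2 : ℓ₁ * (ℓ₁ + 1) / r ^ 2 < ℓ₂ * (ℓ₂ + 1) / r ^ 2 := by
      rw [div_lt_div_iff₀ hr2 hr2]
      have hc : ℓ₁ * (ℓ₁ + 1) < ℓ₂ * (ℓ₂ + 1) := by nlinarith
      exact mul_lt_mul_of_pos_right hc hr2
    simp only [hQ₁, hQ₂]
    linarith
  obtain ⟨ε₁, hε₁, hpos₁⟩ := SturmAux.pos_near h₁.2.2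
  obtain ⟨ε₂, hε₂, hpos₂⟩ := SturmAux.pos_near h₂.2.2
  have hratio := SturmAux.ratio_tendsto hℓ hε₁ h₁.2.2 h₂.2.2 hpos₁
  have hfin₁ : {x | x ∈ Set.Ioo 0 z₂ ∧ ψ₁ x = 0}.Finite :=
    SturmAux.finite_zeros S₁ hQ₁c hε₁ hpos₁ z₂
  have hfin₂ : {x | x ∈ Set.Ioo 0 z₂ ∧ ψ₂ x = 0}.Finite :=
    SturmAux.finite_zeros S₂ hQ₂c hε₂ hpos₂ z₂
  have hz₂notmem : z₂ ∉ hfin₂.toFinset := by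
    rw [Set.Finite.mem_toFinset]
    rintro ⟨⟨-, h⟩, -⟩
    exact lt_irrefl _ h
  set M : Finset ℝ := insert z₂ hfin₂.toFinset with hMdef
  have hMcard : M.card = n := by
    rw [hMdef, Finset.card_insert_of_notMem hz₂notmem]
    have hc : hfin₂.toFinset.card = n - 1 := by
      rw [← Set.ncard_eq_toFinset_card _ hfin₂]
      exact hz₂count
    omega
  have hMmem : ∀ y ∈ M, 0 < y ∧ y ≤ z₂ ∧ ψ₂ y = 0 := by
    intro y hy
    rcases Finset.mem_insert.1 hy with rfl | hy
    · exact ⟨hz₂pos, le_refl _, hz₂zero⟩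
    · rw [Set.Finite.mem_toFinset] at hy
      exact ⟨hy.1.1, hy.1.2.le, hy.2⟩
  have hmemM : ∀ y, 0 < y → y < z₂ → ψ₂ y = 0 → y ∈ M := by
    intro y hy1 hy2 hy3
    exact Finset.mem_insert_of_mem (by rw [Set.Finite.mem_toFinset]; exact ⟨⟨hy1, hy2⟩, hy3⟩)
  set e := M.orderIsoOfFin hMcard with hedef
  have hestrict : ∀ {i j : Fin n}, i < j → (e i : ℝ) < (e j : ℝ) :=
    fun hij => Subtype.coe_lt_coe.2 (e.lt_iff_lt.2 hij)
  have hemono : ∀ {i j : Fin n}, i ≤ j → (e i : ℝ) ≤ (e j : ℝ) :=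
    fun hij => Subtype.coe_le_coe.2 (e.le_iff_le.2 hij)
  set A : Fin n → ℝ := fun i => if h : i.1 = 0 then 0 else
    (e ⟨i.1 - 1, Nat.lt_of_le_of_lt (Nat.pred_le _) i.isLt⟩ : ℝ) with hAdef
  have hA_nonneg : ∀ i, 0 ≤ A i := by
    intro i
    by_cases h : i.1 = 0
    · simp only [hAdef, dif_pos h]
      exact le_refl 0
    · simp only [hAdef, dif_neg h]
      exact (hMmem _ (e _).2).1.le
  have hA_lt : ∀ i : Fin n, A i < (e i : ℝ) := by
    intro i
    by_cases h : i.1 = 0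
    · simp only [hAdef, dif_pos h]
      exact (hMmem _ (e i).2).1
    · simp only [hAdef, dif_neg h]
      exact hestrict (by rw [Fin.lt_def]; simp; omega)
  have key : ∀ i : Fin n, ∃ x, x ∈ Set.Ioo (A i) ((e i : ℝ)) ∧ ψ₁ x = 0 := by
    intro i
    have hbi := hMmem _ (e i).2
    have hno : ∀ y ∈ Set.Ioo (A i) ((e i : ℝ)), ψ₂ y ≠ 0 := by
      intro y hy hψy
      have hy0 : 0 < y := lt_of_le_of_lt (hA_nonneg i) hy.1
      have hyz : y < z₂ := lt_of_lt_of_le hy.2 hbi.2.1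
      have hyM : y ∈ M := hmemM y hy0 hyz hψy
      obtain ⟨j, hj⟩ : ∃ j, (e j : ℝ) = y := ⟨e.symm ⟨y, hyM⟩, by simp⟩
      have hjlt : j < i := e.lt_iff_lt.1 (Subtype.coe_lt_coe.1 (by rw [hj]; exact hy.2))
      by_cases h0 : i.1 = 0
      · have := Fin.lt_def.1 hjlt
        omega
      · have hle : j ≤ ⟨i.1 - 1, Nat.lt_of_le_of_lt (Nat.pred_le _) i.isLt⟩ := by
          rw [Fin.le_def]
          have := Fin.lt_def.1 hjlt
          simp
          omega
        have hle2 : (e j : ℝ) ≤ A i := by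
          simp only [hAdef, dif_neg h0]
          exact hemono hle
        rw [hj] at hle2
        exact absurd hy.1 (not_lt.2 hle2)
    by_cases h0 : i.1 = 0
    · have hA0 : A i = 0 := by simp only [hAdef, dif_pos h0]
      rw [hA0] at hno ⊢
      exact SturmAux.sturm_zero hbi.1 S₁ S₂
        (fun r hr => hQlt r hr.1) hε₁ hpos₁ hε₂ hpos₂ hbi.2.2 hno hratio
    · have hAi : A i = (e ⟨i.1 - 1, Nat.lt_of_le_of_lt (Nat.pred_le _) i.isLt⟩ : ℝ) := by
        simp only [hAdef, dif_neg h0]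
      have hA0 : 0 < A i := by
        rw [hAi]; exact (hMmem _ (e _).2).1
      have hga : ψ₂ (A i) = 0 := by
        rw [hAi]; exact (hMmem _ (e _).2).2.2
      exact SturmAux.sturm_interior hA0 (hA_lt i) S₁ S₂
        (fun r hr => hQlt r (lt_trans hA0 hr.1)) hga hbi.2.2 hno
  choose x hx hψx using key
  have hxmono : StrictMono x := by
    intro i j hij
    have hj0 : j.1 ≠ 0 := by
      have := Fin.lt_def.1 hij
      omega
    have h2 : (e i : ℝ) ≤ A j := by
      simp only [hAdef, dif_neg hj0]
      apply hemono
      rw [Fin.le_def]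
      have := Fin.lt_def.1 hij
      simp
      omega
    have h1 := (hx i).2
    have h3 := (hx j).1
    linarith
  have hxIoo : ∀ i, x i ∈ Set.Ioo 0 z₂ := by
    intro i
    exact ⟨lt_of_le_of_lt (hA_nonneg i) (hx i).1,
      lt_of_lt_of_le (hx i).2 (hMmem _ (e i).2).2.1⟩
  set s : Finset ℝ := Finset.image x Finset.univ with hsdef
  have hscard : s.card = n := by
    rw [hsdef, Finset.card_image_of_injective _ hxmono.injective, Finset.card_univ,
      Fintype.card_fin]
  have hsmem : ∀ y ∈ s, y ∈ Set.Ioo 0 z₂ ∧ ψ₁ y = 0 := by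
    intro y hy
    obtain ⟨i, -, rfl⟩ := Finset.mem_image.1 hy
    exact ⟨hxIoo i, hψx i⟩
  refine ⟨⟨s, hscard, hsmem⟩, ?_⟩
  have hsub : ↑s ⊆ {x | x ∈ Set.Ioo 0 z₂ ∧ ψ₁ x = 0} := fun y hy => hsmem y hy
  have hge : n ≤ {x | x ∈ Set.Ioo 0 z₂ ∧ ψ₁ x = 0}.ncard := by
    calc n = s.card := hscard.symm
    _ = (↑s : Set ℝ).ncard := (Set.ncard_coe_finset s).symm
    _ ≤ _ := Set.ncard_le_ncard hsub hfin₁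
  have hk : n - 1 < {x | x ∈ Set.Ioo 0 z₂ ∧ ψ₁ x = 0}.ncard := by omega
  obtain ⟨z₁, hz₁S, hz₁count⟩ := SturmAux.nth_of_finite hfin₁ hk
  refine ⟨z₁, ⟨hz₁S.1.1, hz₁S.2, ?_⟩, hz₁S.1.2⟩
  have hseteq : {x ∈ Set.Ioo 0 z₁ | ψ₁ x = 0} =
      {x ∈ {x | x ∈ Set.Ioo 0 z₂ ∧ ψ₁ x = 0} | x < z₁} := by
    ext y
    simp only [Set.mem_setOf_eq, Set.mem_Ioo]
    constructor
    · rintro ⟨⟨hy1, hy2⟩, hy3⟩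
      exact ⟨⟨⟨hy1, lt_trans hy2 hz₁S.1.2⟩, hy3⟩, hy2⟩
    · rintro ⟨⟨⟨hy1, -⟩, hy3⟩, hy2⟩
      exact ⟨⟨hy1, hy2⟩, hy3⟩
  rw [hseteq]
  exact hz₁count
end

section
/- Let V : (0,∞) → ℝ, let ℓ ≥ 0, and let ψ : ℝ × (0,∞) → ℝ be a family of solutions such that for every E the map r ↦ ψ(E,r) is twice continuously differentiable and satisfies ∂²ψ/∂r²(E,r) + (E − V(r) − ℓ(ℓ+1)/r²) ψ(E,r) = 0 for all r > 0. Assume that the partial derivative ∂ψ/∂E(E,·) exists, is twice continuously differentiable in r, satisfies the inhomogeneous equation ∂²(∂ψ/∂E)/∂r²(E,r) + (E − V(r) − ℓ(ℓ+1)/r²) ∂ψ/∂E(E,r) = −ψ(E,r) for all r > 0, and that the boundary terms ψ(E,s)·∂/∂r(∂ψ/∂E)(E,s) and ∂ψ/∂E(E,s)·∂ψ/∂r(E,s) both tend to 0 as s → 0⁺. Let I ⊆ ℝ be an open interval and r̄ : I → (0,∞) a differentiable function with ψ(E, r̄(E)) = 0 and ∂ψ/∂r(E, r̄(E)) ≠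 0 for all E ∈ I, and suppose s ↦ ψ(E,s)² is integrable on (0, r̄(E)). Then for every E ∈ I, the derivative of the zero with respect to the energy satisfies r̄'(E) = − (∫₀^{r̄(E)} ψ(E,s)² ds) / (∂ψ/∂r(E, r̄(E)))². In particular, −r̄'(E) equals the Dirichlet normalization constant ρ = ∫₀^{r̄(E)} ψ(E,s)² ds / (∂ψ/∂r(E,r̄(E)))² and is strictly positive. -/
open Set Filter Topology MeasureTheory


lemma reg_aux {f : ℝ → ℝ} (hf : ContDiffOn ℝ 2 f (Set.Ioi 0)) :
    (∀ x ∈ Set.Ioi (0:ℝ), HasDerivAt f (deriv f x) x) ∧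
    (∀ x ∈ Set.Ioi (0:ℝ), HasDerivAt (deriv f) (deriv (deriv f) x) x) ∧
    ContinuousOn (deriv (deriv f)) (Set.Ioi 0) ∧
    ContinuousOn (deriv f) (Set.Ioi 0) := by
  have ho : IsOpen (Set.Ioi (0:ℝ)) := isOpen_Ioi
  have h1 : ContDiffOn ℝ 1 (deriv f) (Set.Ioi 0) :=
    hf.deriv_of_isOpen ho (by norm_num)
  have h0 : ContDiffOn ℝ 0 (deriv (deriv f)) (Set.Ioi 0) :=
    h1.deriv_of_isOpen ho (by norm_num)
  refine ⟨fun x hx => ?_, fun x hx => ?_, h0.continuousOn, h1.continuousOn⟩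
  · exact ((hf.differentiableOn (by norm_num)).differentiableAt
      (ho.mem_nhds hx)).hasDerivAt
  · exact ((h1.differentiableOn (by norm_num)).differentiableAt
      (ho.mem_nhds hx)).hasDerivAt

lemma arith_X {a b mm X R : ℝ} (ha : 0 < a)
    (hkey : a * X ≤ (a + 1) * b + mm + a / 2 * (a + 1 + X))
    (hR : R = (a + 1) * b + mm + a * (a + 1) / 2 + 1) :
    X ≤ 2 * R / a := by
  rw [le_div_iff₀ ha]
  nlinarith

lemma gron_aux {g g' : ℝ → ℝ} {K a b : ℝ}
    (hg : ∀ s ∈ Set.Icc a b, HasDerivAt g (g' s) s)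
    (hbd : ∀ s ∈ Set.Icc a b, |g' s| ≤ K * g s) :
    ∀ s ∈ Set.Icc a b, g s ≤ g b * Real.exp (K * (b - s)) := by
  intro s hs
  have hab : a ≤ b := le_trans hs.1 hs.2
  set h : ℝ → ℝ := fun t => g t * Real.exp (K * t) with hh
  have hd : ∀ t ∈ Set.Icc a b,
      HasDerivAt h ((g' t + K * g t) * Real.exp (K * t)) t := by
    intro t ht
    have he : HasDerivAt (fun t => Real.exp (K * t)) (Real.exp (K * t) * K) t := by
      simpa using ((hasDerivAt_id t).const_mul K).exp
    have := (hg t ht).mul he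
    exact this.congr_deriv (by ring)
  have hmono : MonotoneOn h (Set.Icc a b) := by
    apply monotoneOn_of_deriv_nonneg (convex_Icc a b)
    · exact fun t ht => (hd t ht).continuousAt.continuousWithinAt
    · intro t ht
      rw [interior_Icc] at ht
      exact (hd t (Ioo_subset_Icc_self ht)).differentiableAt.differentiableWithinAt
    · intro t ht
      rw [interior_Icc] at ht
      rw [(hd t (Ioo_subset_Icc_self ht)).deriv]
      have h1 : -(K * g t) ≤ g' t := neg_le_of_abs_le (hbd t (Ioo_subset_Icc_self ht))
      have h2 : 0 ≤ g' t + K * g t := by linarith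
      exact mul_nonneg h2 (Real.exp_pos _).le
  have hle : h s ≤ h b := hmono hs (Set.right_mem_Icc.2 hab) hs.2
  have hE : Real.exp (K * (b - s)) = Real.exp (K * b) / Real.exp (K * s) := by
    rw [← Real.exp_sub]; ring_nf
  rw [hE, mul_div_assoc' , le_div_iff₀ (Real.exp_pos _)]
  exact hle

lemma wronskian_ftc {f g h : ℝ → ℝ}
    (hf : ContDiffOn ℝ 2 f (Set.Ioi 0)) (hg : ContDiffOn ℝ 2 g (Set.Ioi 0))
    (hcomb : ∀ s ∈ Set.Ioi (0:ℝ),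
      f s * deriv (deriv g) s - g s * deriv (deriv f) s = h s)
    {a b : ℝ} (ha : 0 < a) (hb : 0 < b) :
    f b * deriv g b - g b * deriv f b - (f a * deriv g a - g a * deriv f a)
      = ∫ s in a..b, h s := by
  obtain ⟨hf1, hf2, hf3, hf4⟩ := reg_aux hf
  obtain ⟨hg1, hg2, hg3, hg4⟩ := reg_aux hg
  have hsub : Set.uIcc a b ⊆ Set.Ioi 0 := by
    intro x hx
    have := hx.1
    rw [Set.mem_uIcc] at hx
    rcases hx with h | h
    · exact lt_of_lt_of_le ha h.1
    · exact lt_of_lt_of_le hb h.1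
  have hW : ∀ s ∈ Set.uIcc a b,
      HasDerivAt (fun t => f t * deriv g t - g t * deriv f t) (h s) s := by
    intro s hs
    have hs0 : s ∈ Set.Ioi (0:ℝ) := hsub hs
    have H := ((hf1 s hs0).mul (hg2 s hs0)).sub ((hg1 s hs0).mul (hf2 s hs0))
    exact H.congr_deriv (by rw [← hcomb s hs0]; ring)
  have hint : IntervalIntegrable h MeasureTheory.volume a b := by
    apply ContinuousOn.intervalIntegrable
    intro s hs
    have hs0 : s ∈ Set.Ioi (0:ℝ) := hsub hs
    have hcont : ContinuousOn (fun s => f s * deriv (deriv g) s - g s * deriv (deriv f) s)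
        (Set.Ioi 0) :=
      ((hf.continuousOn.mul hg3).sub (hg.continuousOn.mul hf3))
    have hcont2 : ContinuousOn h (Set.Ioi 0) := by
      apply hcont.congr
      intro x hx
      exact (hcomb x hx).symm
    exact (hcont2.mono hsub) s hs
  have := intervalIntegral.integral_eq_sub_of_hasDerivAt hW hint
  rw [this]


set_option maxHeartbeats 1000000 in
/-- The derivative of a line of zeros with respect to the energy:
`r̄'(E) = − (∫₀^{r̄(E)} ψ(E,s)² ds) / (∂ψ/∂r(E, r̄(E)))²`, so that
`−r̄'(E)` equals the Dirichlet normalization constant and is positive.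

Here `ψ E` is, for each energy `E`, a solution of the radial Schrödinger
equation, `φ E = ∂ψ/∂E(E,·)` solves the corresponding inhomogeneous equation,
the boundary terms vanish at the origin, and `rbar` is a differentiable line of
zeros of `ψ` on the open interval `I` along which `∂ψ/∂r ≠ 0`. -/
theorem deriv_line_of_zeros_eq_neg_normalization
    (V : ℝ → ℝ) (ℓ : ℝ) (hℓ : 0 ≤ ℓ)
    (ψ φ : ℝ → ℝ → ℝ)
    -- for each E, `ψ E` is twice continuously differentiable in r on (0,∞)
    (hψC : ∀ E, ContDiffOn ℝ 2 (ψ E) (Set.Ioi 0))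
    -- the radial Schrödinger equation
    (hODE : ∀ E, ∀ r ∈ Set.Ioi (0 : ℝ),
      deriv (deriv (ψ E)) r + (E - V r - ℓ * (ℓ + 1) / r ^ 2) * ψ E r = 0)
    -- `φ E r` is the partial derivative of `ψ` with respect to the energy
    (hφ : ∀ E, ∀ r ∈ Set.Ioi (0 : ℝ), HasDerivAt (fun E' => ψ E' r) (φ E r) E)
    (hφC : ∀ E, ContDiffOn ℝ 2 (φ E) (Set.Ioi 0))
    -- the inhomogeneous equation satisfied by `∂ψ/∂E`
    (hφODE : ∀ E, ∀ r ∈ Set.Ioi (0 : ℝ),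
      deriv (deriv (φ E)) r + (E - V r - ℓ * (ℓ + 1) / r ^ 2) * φ E r = -ψ E r)
    -- vanishing of the boundary terms at the origin
    (hb₁ : ∀ E, Tendsto (fun s => ψ E s * deriv (φ E) s)
      (nhdsWithin 0 (Set.Ioi 0)) (nhds 0))
    (hb₂ : ∀ E, Tendsto (fun s => φ E s * deriv (ψ E) s)
      (nhdsWithin 0 (Set.Ioi 0)) (nhds 0))
    -- the line of zeros
    (I : Set ℝ) (hIopen : IsOpen I) (hIint : I.OrdConnected)
    (rbar : ℝ → ℝ)
    (hrpos : ∀ E ∈ I, 0 < rbar E)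
    (hrdiff : ∀ E ∈ I, DifferentiableAt ℝ rbar E)
    (hzero : ∀ E ∈ I, ψ E (rbar E) = 0)
    (hslope : ∀ E ∈ I, deriv (ψ E) (rbar E) ≠ 0)
    (hsq : ∀ E ∈ I, IntegrableOn (fun s => (ψ E s) ^ 2) (Set.Ioo 0 (rbar E))) :
    ∀ E ∈ I,
      deriv rbar E =
        -(∫ s in Set.Ioo 0 (rbar E), (ψ E s) ^ 2) / (deriv (ψ E) (rbar E)) ^ 2 ∧
      0 < -deriv rbar E := by
  intro E hE
  obtain ⟨hu1, hu2, hu3, hu4⟩ := reg_aux (hψC E)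
  set r0 := rbar E with hr0def
  have hr0 : 0 < r0 := hrpos E hE
  have hr0m : r0 ∈ Set.Ioi (0:ℝ) := hr0
  set m := deriv (ψ E) r0 with hmdef
  have hm : m ≠ 0 := hslope E hE
  have hz : ψ E r0 = 0 := hzero E hE
  set S := ∫ s in Set.Ioo 0 r0, (ψ E s)^2 with hSdef
  -- Step A : Wronskian identity with the energy derivative
  have hA : φ E r0 * m = S := by
    set W : ℝ → ℝ := fun s => ψ E s * deriv (φ E) s - φ E s * deriv (ψ E) s with hWdef
    have hWb : Tendsto W (𝓝[>] (0:ℝ)) (𝓝 0) := by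
      have := (hb₁ E).sub (hb₂ E); simpa using this
    have key : ∀ a : ℝ, 0 < a → a < r0 →
        W r0 - W a = -∫ s in Set.Ioo a r0, (ψ E s)^2 := by
      intro a ha har
      have hcomb : ∀ s ∈ Set.Ioi (0:ℝ),
          ψ E s * deriv (deriv (φ E)) s - φ E s * deriv (deriv (ψ E)) s
            = -(ψ E s)^2 := by
        intro s hs
        have e1 := hODE E s hs
        have e2 := hφODE E s hs
        linear_combination ψ E s * e2 - φ E s * e1
      have H := wronskian_ftc (hψC E) (hφC E) hcomb ha hr0
      rw [intervalIntegral.integral_of_le har.le] at H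
      rw [MeasureTheory.integral_Ioc_eq_integral_Ioo] at H
      rw [hWdef]
      simp only []
      rw [H]
      rw [MeasureTheory.integral_neg]
    -- sequence of left endpoints
    set e : ℕ → ℝ := fun n => r0 / (n+2) with hedef
    have hepos : ∀ n, 0 < e n := fun n => by positivity
    have helt : ∀ n, e n < r0 := by
      intro n
      rw [hedef]
      rw [div_lt_iff₀ (by positivity)]
      nlinarith [hr0]
    have hetend : Tendsto e atTop (𝓝[>] (0:ℝ)) := by
      rw [tendsto_nhdsWithin_iff]
      constructor
      · have h2 : Tendsto (fun n : ℕ => ((n:ℝ)+2)) atTop atTop :=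
          tendsto_natCast_atTop_atTop.atTop_add tendsto_const_nhds
        simpa [hedef, div_eq_mul_inv] using h2.inv_tendsto_atTop.const_mul r0
      · exact Eventually.of_forall fun n => hepos n
    have hmono : Monotone (fun n => Set.Ioo (e n) r0) := by
      intro i j hij
      apply Set.Ioo_subset_Ioo_left
      have hij' : ((i:ℝ)+2) ≤ ((j:ℝ)+2) := by exact_mod_cast Nat.add_le_add_right hij 2
      simp only [hedef]
      exact div_le_div_of_nonneg_left hr0.le (by positivity) hij'
    have hunion : (⋃ n, Set.Ioo (e n) r0) = Set.Ioo 0 r0 := by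
      apply Set.Subset.antisymm
      · exact Set.iUnion_subset fun n => Set.Ioo_subset_Ioo_left (hepos n).le
      · intro x hx
        obtain ⟨n, hn⟩ := exists_nat_gt (r0 / x)
        refine Set.mem_iUnion.2 ⟨n, ?_, hx.2⟩
        rw [hedef]
        rw [div_lt_iff₀ (by positivity)]
        have hx1 := hx.1
        rw [div_lt_iff₀ hx1] at hn
        nlinarith
    have hinte : Tendsto (fun n => ∫ s in Set.Ioo (e n) r0, (ψ E s)^2) atTop (𝓝 S) := by
      have h := MeasureTheory.tendsto_setIntegral_of_monotone
        (fun n => measurableSet_Ioo) hmono (by rw [hunion]; exact hsq E hE)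
      rwa [hunion] at h
    have hWe : Tendsto (fun n => W (e n)) atTop (𝓝 0) := hWb.comp hetend
    have hid : ∀ n, W r0 = W (e n) - ∫ s in Set.Ioo (e n) r0, (ψ E s)^2 := by
      intro n
      have := key (e n) (hepos n) (helt n)
      linarith
    have hlim : Tendsto (fun n => W (e n) - ∫ s in Set.Ioo (e n) r0, (ψ E s)^2)
        atTop (𝓝 (0 - S)) := hWe.sub hinte
    have hWr0 : W r0 = 0 - S := by
      refine tendsto_nhds_unique ?_ hlim
      have heq : (fun n => W (e n) - ∫ s in Set.Ioo (e n) r0, (ψ E s)^2)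
          = fun _ : ℕ => W r0 := by
        funext n; rw [← hid n]
      rw [heq]
      exact tendsto_const_nhds
    have hW0 : W r0 = -(φ E r0 * m) := by
      show ψ E r0 * deriv (φ E) r0 - φ E r0 * m = -(φ E r0 * m)
      rw [hz]; ring
    linarith [hWr0, hW0]
  -- positivity of the normalization integral
  have hSpos : 0 < S := by
    have hsl : Tendsto (slope (ψ E) r0) (𝓝[≠] r0) (𝓝 m) :=
      hasDerivAt_iff_tendsto_slope.1 (hu1 r0 hr0m)
    have hsl' : Tendsto (slope (ψ E) r0) (𝓝[<] r0) (𝓝 m) :=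
      hsl.mono_left (nhdsWithin_mono _ (fun x hx => ne_of_lt hx))
    have hne : ∀ᶠ t in 𝓝[<] r0, slope (ψ E) r0 t ≠ 0 := hsl'.eventually_ne hm
    have hmem : ∀ᶠ t in 𝓝[<] r0, t ∈ Set.Ioo 0 r0 :=
      Ioo_mem_nhdsLT_of_mem ⟨hr0, le_refl r0⟩
    obtain ⟨t0, ht0ne, ht0mem⟩ := (hne.and hmem).exists
    have hψt0 : ψ E t0 ≠ 0 := by
      intro h
      apply ht0ne
      rw [slope_def_field, h, hz]
      simp
    set c := (ψ E t0)^2 / 2 with hcdef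
    have hcpos : 0 < c := by positivity
    have hct : ContinuousAt (fun s => (ψ E s)^2) t0 := by
      have := ((hψC E).continuousOn.continuousAt
        (isOpen_Ioi.mem_nhds (show t0 ∈ Set.Ioi (0:ℝ) from ht0mem.1)))
      exact this.pow 2
    have hev : ∀ᶠ s in 𝓝 t0, c ≤ (ψ E s)^2 ∧ s ∈ Set.Ioo 0 r0 := by
      have h1 : ∀ᶠ s in 𝓝 t0, c ≤ (ψ E s)^2 := by
        have : Set.Ioi c ∈ 𝓝 ((ψ E t0)^2) := by
          apply Ioi_mem_nhds
          rw [hcdef]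
          nlinarith [sq_nonneg (ψ E t0), hψt0]
        exact (hct.eventually_mem this).mono fun x hx => le_of_lt hx
      have h2 : ∀ᶠ s in 𝓝 t0, s ∈ Set.Ioo 0 r0 :=
        isOpen_Ioo.eventually_mem ht0mem
      exact h1.and h2
    obtain ⟨η, hηpos, hball⟩ := Metric.eventually_nhds_iff.1 hev
    set J0 := Set.Icc (t0 - η/2) (t0 + η/2) with hJ0def
    have hJ0sub : J0 ⊆ Set.Ioo 0 r0 := by
      intro x hx
      have : dist x t0 < η := by
        rw [Real.dist_eq, abs_lt]
        constructor <;> [linarith [hx.1]; linarith [hx.2]]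
      exact (hball this).2
    have hJ0c : ∀ x ∈ J0, c ≤ (ψ E x)^2 := by
      intro x hx
      have : dist x t0 < η := by
        rw [Real.dist_eq, abs_lt]
        constructor <;> [linarith [hx.1]; linarith [hx.2]]
      exact (hball this).1
    have hint : IntegrableOn (fun s => (ψ E s)^2) J0 := (hsq E hE).mono_set hJ0sub
    have h2 : c * (volume J0).toReal ≤ ∫ s in J0, (ψ E s)^2 := by
      have := MeasureTheory.setIntegral_ge_of_const_le measurableSet_Icc
        (by exact (measure_Icc_lt_top).ne) hJ0c hint
      rw [smul_eq_mul, mul_comm] at this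
      exact this
    have hvol : (volume J0).toReal = η := by
      rw [hJ0def, Real.volume_Icc]
      rw [ENNReal.toReal_ofReal (by linarith)]
      ring
    have h3 : ∫ s in J0, (ψ E s)^2 ≤ S := by
      apply MeasureTheory.setIntegral_mono_set (hsq E hE)
      · exact Eventually.of_forall fun s => sq_nonneg _
      · exact HasSubset.Subset.eventuallyLE hJ0sub
    nlinarith [h2, h3, hvol, mul_pos hcpos hηpos]
  have hphi0 : φ E r0 ≠ 0 := by
    intro h
    rw [h, zero_mul] at hA
    linarith
  -- the potential term is bounded near r0
  have hqb : ∃ δ C : ℝ, 0 < δ ∧ 0 ≤ C ∧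
      Set.Icc (r0-δ) (r0+δ) ⊆ Set.Ioi (0:ℝ) ∧
      ∀ s ∈ Set.Icc (r0-δ) (r0+δ), |E - V s - ℓ*(ℓ+1)/s^2| ≤ C := by
    by_contra hcon
    push_neg at hcon
    have hs : ∀ n : ℕ, ∃ s, s ∈ Set.Icc (r0 - min (r0/2) (1/(n+1)))
        (r0 + min (r0/2) (1/(n+1))) ∧ (n:ℝ) < |E - V s - ℓ*(ℓ+1)/s^2| := by
      intro n
      have hδ : (0:ℝ) < min (r0/2) (1/(n+1)) := by positivity
      have hsub : Set.Icc (r0 - min (r0/2) (1/((n:ℝ)+1)))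
          (r0 + min (r0/2) (1/((n:ℝ)+1))) ⊆ Set.Ioi (0:ℝ) := by
        intro x hx
        have h1 : min (r0/2) (1/((n:ℝ)+1)) ≤ r0/2 := min_le_left _ _
        have h2 := hx.1
        simp only [Set.mem_Ioi]
        linarith
      obtain ⟨s, hs1, hs2⟩ := hcon _ (n:ℝ) hδ (Nat.cast_nonneg n) hsub
      exact ⟨s, hs1, hs2⟩
    choose sq hsq1 hsq2 using hs
    have hsqJ : ∀ n, |sq n - r0| ≤ min (r0/2) (1/((n:ℝ)+1)) := by
      intro n
      have h1 := (hsq1 n).1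
      have h2 := (hsq1 n).2
      rw [abs_le]
      constructor <;> linarith
    have hstend : Tendsto sq atTop (𝓝 r0) := by
      have h0 : Tendsto (fun n : ℕ => sq n - r0) atTop (𝓝 0) := by
        apply squeeze_zero_norm (fun n => le_trans (hsqJ n) (min_le_right _ _))
        exact tendsto_one_div_add_atTop_nhds_zero_nat
      have := h0.add_const r0
      simpa using this
    have hzero' : ∀ E'', ψ E'' r0 = 0 := by
      intro E''
      obtain ⟨hw1, hw2, hw3, hw4⟩ := reg_aux (hψC E'')
      have hJc : Set.Icc (r0/2) (r0 + r0/2) ⊆ Set.Ioi (0:ℝ) := by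
        intro x hx
        have := hx.1
        simp only [Set.mem_Ioi]
        linarith
      obtain ⟨B, hB⟩ := (isCompact_Icc).exists_bound_of_continuousOn (hw3.mono hJc)
      have hmem : ∀ n, sq n ∈ Set.Icc (r0/2) (r0 + r0/2) := by
        intro n
        have h1 := abs_le.1 (hsqJ n)
        have h2 : min (r0/2) (1/((n:ℝ)+1)) ≤ r0/2 := min_le_left _ _
        constructor <;> [linarith [h1.1]; linarith [h1.2]]
      set c := |E'' - E| with hcdef2
      have hbnd : ∀ n : ℕ, c < (n:ℝ) → |ψ E'' (sq n)| ≤ B / ((n:ℝ) - c) := by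
        intro n hn
        have hpos : sq n ∈ Set.Ioi (0:ℝ) := hJc (hmem n)
        have hode := hODE E'' (sq n) hpos
        have heq : (E'' - V (sq n) - ℓ*(ℓ+1)/(sq n)^2) * ψ E'' (sq n)
            = -(deriv (deriv (ψ E'')) (sq n)) := by linarith
        have habs : |E'' - V (sq n) - ℓ*(ℓ+1)/(sq n)^2| * |ψ E'' (sq n)| ≤ B := by
          rw [← abs_mul, heq, abs_neg]
          exact hB _ (hmem n)
        have hlow : (n:ℝ) - c ≤ |E'' - V (sq n) - ℓ*(ℓ+1)/(sq n)^2| := by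
          have h1 : E'' - V (sq n) - ℓ*(ℓ+1)/(sq n)^2
              = (E - V (sq n) - ℓ*(ℓ+1)/(sq n)^2) + (E'' - E) := by ring
          have h2 : |E - V (sq n) - ℓ*(ℓ+1)/(sq n)^2|
              ≤ |E'' - V (sq n) - ℓ*(ℓ+1)/(sq n)^2| + |E'' - E| := by
            rw [h1]
            have := abs_add_le (E - V (sq n) - ℓ*(ℓ+1)/(sq n)^2 + (E'' - E)) (-(E'' - E))
            simp only [abs_neg] at this
            calc |E - V (sq n) - ℓ*(ℓ+1)/(sq n)^2|
                = |E - V (sq n) - ℓ*(ℓ+1)/(sq n)^2 + (E'' - E) + -(E''-E)| := by ring_nf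
              _ ≤ _ := by
                  refine le_trans this ?_
                  simp
          have h3 := hsq2 n
          linarith
        have hncpos : 0 < (n:ℝ) - c := by linarith
        have h4 : ((n:ℝ) - c) * |ψ E'' (sq n)| ≤ B := by
          calc ((n:ℝ) - c) * |ψ E'' (sq n)|
              ≤ |E'' - V (sq n) - ℓ*(ℓ+1)/(sq n)^2| * |ψ E'' (sq n)| :=
                mul_le_mul_of_nonneg_right hlow (abs_nonneg _)
            _ ≤ B := habs
        rw [le_div_iff₀ hncpos, mul_comm]
        exact h4
      have hT1 : Tendsto (fun n => ψ E'' (sq n)) atTop (𝓝 (ψ E'' r0)) := by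
        have hcontat : ContinuousAt (ψ E'') r0 :=
          (hψC E'').continuousOn.continuousAt (isOpen_Ioi.mem_nhds hr0m)
        exact hcontat.tendsto.comp hstend
      have hT2 : Tendsto (fun n => ψ E'' (sq n)) atTop (𝓝 0) := by
        have h1 : Tendsto (fun n : ℕ => ((n:ℝ) - c)) atTop atTop := by
          have h0 := tendsto_atTop_add_const_right atTop (-c)
            (tendsto_natCast_atTop_atTop (R := ℝ))
          simpa [sub_eq_add_neg] using h0
        have hg : Tendsto (fun n : ℕ => B / ((n:ℝ) - c)) atTop (𝓝 0) := by
          have h2 := h1.inv_tendsto_atTop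
          have h3 := h2.const_mul B
          simpa [div_eq_mul_inv] using h3
        apply squeeze_zero_norm' ?_ hg
        filter_upwards [eventually_gt_atTop (⌈c⌉₊)] with n hn
        apply hbnd
        calc c ≤ (⌈c⌉₊ : ℝ) := Nat.le_ceil c
          _ < (n:ℝ) := by exact_mod_cast hn
      exact tendsto_nhds_unique hT1 hT2
    apply hphi0
    have hc : HasDerivAt (fun E' => ψ E' r0) 0 E := by
      have hfun : (fun E' => ψ E' r0) = fun _ => (0:ℝ) := funext hzero'
      rw [hfun]
      exact hasDerivAt_const E 0
    exact HasDerivAt.unique (hφ E r0 hr0m) hc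
  obtain ⟨δ0, C, hδ0, hC, hJ0sub, hqC0⟩ := hqb
  -- shrink δ so that ψ E does not vanish on the punctured neighborhood
  have hneu : ∀ᶠ t in 𝓝[≠] r0, ψ E t ≠ 0 := by
    have hsl : Tendsto (slope (ψ E) r0) (𝓝[≠] r0) (𝓝 m) :=
      hasDerivAt_iff_tendsto_slope.1 (hu1 r0 hr0m)
    filter_upwards [hsl.eventually_ne hm] with t ht h0
    apply ht
    rw [slope_def_field, h0, hz]
    simp
  have hneu' : ∀ᶠ t in 𝓝 r0, t ≠ r0 → ψ E t ≠ 0 := by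
    have h1 := eventually_nhdsWithin_iff.1 hneu
    filter_upwards [h1] with t ht h2
    exact ht h2
  obtain ⟨θ0, hθ0, hθ⟩ := Metric.eventually_nhds_iff.1 hneu'
  set δ := min δ0 (θ0/2) with hδdef
  have hδ : 0 < δ := lt_min hδ0 (by linarith)
  have hδδ0 : δ ≤ δ0 := min_le_left _ _
  have hδθ : δ ≤ θ0/2 := min_le_right _ _
  set J := Set.Icc (r0-δ) (r0+δ) with hJdef
  have hJbig : J ⊆ Set.Icc (r0-δ0) (r0+δ0) := by
    apply Set.Icc_subset_Icc <;> linarith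
  have hJsub : J ⊆ Set.Ioi (0:ℝ) := fun x hx => hJ0sub (hJbig hx)
  have hqC : ∀ s ∈ J, |E - V s - ℓ*(ℓ+1)/s^2| ≤ C := fun s hs => hqC0 s (hJbig hs)
  have hune : ∀ s ∈ J, s ≠ r0 → ψ E s ≠ 0 := by
    intro s hs hne
    apply hθ _ hne
    obtain ⟨h1, h2⟩ := hs
    rw [Real.dist_eq, abs_lt]
    constructor <;> linarith
  set p := r0 + δ with hpdef
  have hpJ : p ∈ J := ⟨by simp only [hpdef]; linarith, le_refl _⟩
  have hppos : p ∈ Set.Ioi (0:ℝ) := hJsub hpJ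
  have hpne : p ≠ r0 := by simp only [hpdef]; intro h; nlinarith
  have hup : ψ E p ≠ 0 := hune p hpJ hpne
  set aP := |ψ E p| with haPdef
  have haP : 0 < aP := abs_pos.2 hup
  set bP := |deriv (ψ E) p| with hbPdef
  have hbP : 0 ≤ bP := abs_nonneg _
  set K := C + 2 with hKdef
  have hK : 0 < K := by simp only [hKdef]; linarith
  set c₅ := Real.exp (K * δ) with hc5def
  have hc₅ : 1 ≤ c₅ := Real.one_le_exp (by positivity)
  have hc₅0 : 0 < c₅ := lt_of_lt_of_le one_pos hc₅
  obtain ⟨U, hU⟩ := (isCompact_Icc).exists_bound_of_continuousOn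
    ((hψC E).continuousOn.mono hJsub)
  have hU0 : 0 ≤ U := le_trans (norm_nonneg _) (hU p hpJ)
  -- pair Wronskian identity
  have hZ : ∀ E' : ℝ, ∀ b ∈ Set.Ioi (0:ℝ),
      ψ E b * deriv (ψ E') b - ψ E' b * deriv (ψ E) b
        - (ψ E r0 * deriv (ψ E') r0 - ψ E' r0 * deriv (ψ E) r0)
        = ∫ s in r0..b, -((E' - E) * (ψ E s * ψ E' s)) := by
    intro E' b hb
    apply wronskian_ftc (hψC E) (hψC E') ?_ hr0 hb
    intro s hs
    have e1 := hODE E s hs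
    have e2 := hODE E' s hs
    linear_combination ψ E s * e2 - ψ E' s * e1
  -- Gronwall estimate
  have hGron : ∀ E' : ℝ, |E' - E| ≤ 1 → ∀ s ∈ J,
      (ψ E' s)^2 + (deriv (ψ E') s)^2 ≤
        ((ψ E' p)^2 + (deriv (ψ E') p)^2) * Real.exp (K * (p - s)) := by
    intro E' hE1
    obtain ⟨hw1, hw2, hw3, hw4⟩ := reg_aux (hψC E')
    have hIcc : J = Set.Icc (r0-δ) p := by rw [hJdef, hpdef]
    rw [hIcc]
    apply gron_aux (g' := fun s => 2 * ψ E' s * deriv (ψ E') s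
        + 2 * deriv (ψ E') s * deriv (deriv (ψ E')) s)
    · intro s hs
      have hs0 : s ∈ Set.Ioi (0:ℝ) := hJsub (by rw [hIcc]; exact hs)
      have h1 : HasDerivAt (fun t => (ψ E' t)^2) (2 * ψ E' s * deriv (ψ E') s) s := by
        have h0 := (hw1 s hs0).pow 2
        norm_num at h0
        exact h0
      have h2 : HasDerivAt (fun t => (deriv (ψ E') t)^2)
          (2 * deriv (ψ E') s * deriv (deriv (ψ E')) s) s := by
        have h0 := (hw2 s hs0).pow 2
        norm_num at h0
        exact h0
      exact h1.add h2
    · intro s hs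
      have hsJ : s ∈ J := by rw [hIcc]; exact hs
      have hs0 : s ∈ Set.Ioi (0:ℝ) := hJsub hsJ
      have hode := hODE E' s hs0
      have hq := hqC s hsJ
      have hww : deriv (deriv (ψ E')) s = -(E' - V s - ℓ*(ℓ+1)/s^2) * ψ E' s := by
        linarith
      rw [hww]
      have heq : 2 * ψ E' s * deriv (ψ E') s
          + 2 * deriv (ψ E') s * (-(E' - V s - ℓ*(ℓ+1)/s^2) * ψ E' s)
          = (2 * ψ E' s * deriv (ψ E') s)
            * (1 - (E - V s - ℓ*(ℓ+1)/s^2) - (E' - E)) := by ring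
      rw [heq, abs_mul]
      have habs2 : |2 * ψ E' s * deriv (ψ E') s| ≤ (ψ E' s)^2 + (deriv (ψ E') s)^2 := by
        have h1 := sq_nonneg (ψ E' s - deriv (ψ E') s)
        have h2 := sq_nonneg (ψ E' s + deriv (ψ E') s)
        rw [abs_le]
        constructor <;> nlinarith
      have hfac : |1 - (E - V s - ℓ*(ℓ+1)/s^2) - (E' - E)| ≤ K := by
        have h1 := abs_le.1 hq
        have h2 := abs_le.1 hE1
        rw [abs_le, hKdef]
        constructor <;> linarith [h1.1, h1.2, h2.1, h2.2]
      calc |2 * ψ E' s * deriv (ψ E') s| * |1 - (E - V s - ℓ*(ℓ+1)/s^2) - (E' - E)|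
          ≤ ((ψ E' s)^2 + (deriv (ψ E') s)^2) * K := by
            apply mul_le_mul habs2 hfac (abs_nonneg _) (by positivity)
        _ = K * ((ψ E' s)^2 + (deriv (ψ E') s)^2) := by ring
  -- continuity in the energy variable, eventual smallness helpers
  have hsmall : ∀ c : ℝ, 0 < c → ∀ᶠ E' in 𝓝[≠] E, |E' - E| ≤ c := by
    intro c hc
    have h1 : ∀ᶠ E' in 𝓝 E, |E' - E| ≤ c :=
      Metric.eventually_nhds_iff.2 ⟨c, hc, fun y hy =>
        le_of_lt (by simpa [Real.dist_eq] using hy)⟩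
    exact h1.filter_mono nhdsWithin_le_nhds
  have htendE : ∀ s ∈ Set.Ioi (0:ℝ),
      Tendsto (fun E' => ψ E' s) (𝓝[≠] E) (𝓝 (ψ E s)) := by
    intro s hs
    exact ((hφ E s hs).continuousAt.tendsto).mono_left nhdsWithin_le_nhds
  have hevr0 : ∀ c : ℝ, 0 < c → ∀ᶠ E' in 𝓝[≠] E, |ψ E' r0| ≤ c := by
    intro c hc
    have h1 := htendE r0 hr0m
    rw [hz] at h1
    filter_upwards [h1.eventually (Metric.eventually_nhds_iff.2
      ⟨c, hc, fun y hy => le_of_lt (show |y - 0| < c by simpa [Real.dist_eq] using hy)⟩)]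
      with E' hE' using by simpa using hE'
  have hevp : ∀ᶠ E' in 𝓝[≠] E, |ψ E' p - ψ E p| ≤ 1 := by
    have h1 := htendE p hppos
    filter_upwards [h1.eventually (Metric.eventually_nhds_iff.2
      ⟨1, one_pos, fun y hy => le_of_lt (show |y - ψ E p| < 1 by
        simpa [Real.dist_eq] using hy)⟩)] with E' hE' using hE'
  -- uniform bound on ψ E' and its radial derivative on J
  obtain ⟨M₀, hM₀, hMev⟩ : ∃ M₀ : ℝ, 0 < M₀ ∧ ∀ᶠ E' in 𝓝[≠] E,
      ∀ s ∈ J, |ψ E' s| ≤ M₀ ∧ |deriv (ψ E') s| ≤ M₀ := by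
    set R0 := (aP+1)*bP + |m| + aP*(aP+1)/2 + 1 with hR0def
    have hR0 : 0 < R0 := by positivity
    set X₀ := 2*R0/aP with hX0def
    have hX₀ : 0 < X₀ := by positivity
    set M₁ := (aP + 1 + X₀)*c₅ with hM1def
    have hM₁ : 0 < M₁ := by positivity
    refine ⟨M₁, hM₁, ?_⟩
    filter_upwards [hsmall 1 one_pos, hevr0 1 one_pos, hevp,
      hsmall (aP/(2*(δ*U*c₅+1))) (by positivity)] with E' h1 h2 h3 h4
    have hg := hGron E' h1
    -- first: a self-improving bound
    set X := |deriv (ψ E') p| with hXdef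
    have hMw : ∀ s ∈ J, |ψ E' s| ≤ (|ψ E' p| + X)*c₅ ∧
        |deriv (ψ E') s| ≤ (|ψ E' p| + X)*c₅ := by
      intro s hs
      have h5 := hg s hs
      have hexp : Real.exp (K*(p-s)) ≤ c₅^2 := by
        have hps : p - s ≤ 2*δ := by
          obtain ⟨ha1, ha2⟩ := hs
          simp only [hpdef]
          linarith
        calc Real.exp (K*(p-s)) ≤ Real.exp (K*(2*δ)) := by
              apply Real.exp_le_exp.2
              exact mul_le_mul_of_nonneg_left hps hK.le
          _ = c₅^2 := by
              rw [sq, ← Real.exp_add]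
              congr 1
              ring
      have hgp : (ψ E' p)^2 + (deriv (ψ E') p)^2 ≤ (|ψ E' p| + X)^2 := by
        have h1 : (|ψ E' p| + X)^2
            = (ψ E' p)^2 + (deriv (ψ E') p)^2 + 2*(|ψ E' p| * X) := by
          rw [hXdef, add_sq, sq_abs, sq_abs]
          ring
        have h2 : 0 ≤ |ψ E' p| * X := mul_nonneg (abs_nonneg _) (abs_nonneg _)
        linarith
      have hgnn : (0:ℝ) ≤ (ψ E' p)^2 + (deriv (ψ E') p)^2 := by positivity
      have hfull : (ψ E' s)^2 + (deriv (ψ E') s)^2 ≤ (((|ψ E' p| + X)*c₅))^2 := by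
        calc (ψ E' s)^2 + (deriv (ψ E') s)^2
            ≤ ((ψ E' p)^2 + (deriv (ψ E') p)^2) * Real.exp (K*(p-s)) := h5
          _ ≤ ((|ψ E' p| + X)^2) * c₅^2 :=
              mul_le_mul hgp hexp (Real.exp_pos _).le (by positivity)
          _ = ((|ψ E' p| + X)*c₅)^2 := by ring
      have hnn : 0 ≤ (|ψ E' p| + X)*c₅ := by positivity
      constructor
      · apply abs_le_of_sq_le_sq _ hnn
        linarith [sq_nonneg (deriv (ψ E') s), hfull]
      · apply abs_le_of_sq_le_sq _ hnn
        linarith [sq_nonneg (ψ E' s), hfull]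
    -- bound X using the pair Wronskian
    have hZp := hZ E' p hppos
    rw [hz, zero_mul] at hZp
    have hIbnd : |∫ s in r0..p, -((E' - E) * (ψ E s * ψ E' s))|
        ≤ |E' - E| * (U * ((|ψ E' p| + X)*c₅)) * δ := by
      have hb1 : ∀ x ∈ Set.uIoc r0 p, ‖-((E' - E) * (ψ E x * ψ E' x))‖
          ≤ |E' - E| * (U * ((|ψ E' p| + X)*c₅)) := by
        intro x hx
        have hxJ : x ∈ J := by
          rw [Set.uIoc_of_le (show r0 ≤ p by simp only [hpdef]; linarith)] at hx
          exact ⟨by linarith [hx.1.le], hx.2⟩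
        have hx1 : |ψ E x| ≤ U := hU x hxJ
        have hx2 : |ψ E' x| ≤ (|ψ E' p| + X)*c₅ := (hMw x hxJ).1
        rw [norm_neg, Real.norm_eq_abs, abs_mul, abs_mul]
        apply mul_le_mul_of_nonneg_left _ (abs_nonneg (E' - E))
        apply mul_le_mul hx1 hx2 (abs_nonneg _) hU0
      have := intervalIntegral.norm_integral_le_of_norm_le_const hb1
      rw [Real.norm_eq_abs] at this
      apply le_trans this
      have : |p - r0| = δ := by simp only [hpdef]; rw [abs_of_pos (by linarith)]; ring
      rw [this]
    -- extract the inequality for X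
    have hkey : aP * X ≤ (aP+1)*bP + |m| + (aP/2)*(aP+1+X) := by
      have e1 : ψ E p * deriv (ψ E') p
          = ψ E' p * deriv (ψ E) p - ψ E' r0 * m
            + ∫ s in r0..p, -((E' - E) * (ψ E s * ψ E' s)) := by
        linarith [hZp]
      have e2 : aP * X = |ψ E p * deriv (ψ E') p| := by
        rw [abs_mul]
      have e3 : |ψ E p * deriv (ψ E') p| ≤ |ψ E' p| * bP + |ψ E' r0| * |m|
          + |∫ s in r0..p, -((E' - E) * (ψ E s * ψ E' s))| := by
        rw [e1]
        calc |ψ E' p * deriv (ψ E) p - ψ E' r0 * m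
              + ∫ s in r0..p, -((E' - E) * (ψ E s * ψ E' s))|
            ≤ |ψ E' p * deriv (ψ E) p - ψ E' r0 * m|
              + |∫ s in r0..p, -((E' - E) * (ψ E s * ψ E' s))| := abs_add_le _ _
          _ ≤ |ψ E' p * deriv (ψ E) p| + |ψ E' r0 * m|
              + |∫ s in r0..p, -((E' - E) * (ψ E s * ψ E' s))| := by
              linarith [abs_sub (ψ E' p * deriv (ψ E) p) (ψ E' r0 * m)]
          _ = |ψ E' p| * bP + |ψ E' r0| * |m|
              + |∫ s in r0..p, -((E' - E) * (ψ E s * ψ E' s))| := by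
              rw [abs_mul, abs_mul]
      have e4 : |ψ E' p| ≤ aP + 1 := by
        have := abs_sub_abs_le_abs_sub (ψ E' p) (ψ E p)
        linarith [h3]
      have e5 : |E' - E| * (δ*U*c₅) ≤ aP/2 := by
        have hd : 0 ≤ δ*U*c₅ := by positivity
        have h5 := mul_le_mul_of_nonneg_right h4 hd
        apply le_trans h5
        rw [div_mul_eq_mul_div, div_le_div_iff₀ (by positivity) two_pos]
        have h6 : (δ*U*c₅)*2 ≤ 2*(δ*U*c₅+1) := by linarith
        calc aP * (δ*U*c₅) * 2 = aP * ((δ*U*c₅)*2) := by ring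
          _ ≤ aP * (2*(δ*U*c₅+1)) := mul_le_mul_of_nonneg_left h6 haP.le
      have e6 : |∫ s in r0..p, -((E' - E) * (ψ E s * ψ E' s))|
          ≤ (aP/2) * (aP + 1 + X) := by
        apply le_trans hIbnd
        have : |E' - E| * (U * ((|ψ E' p| + X)*c₅)) * δ
            = (|E' - E| * (δ*U*c₅)) * (|ψ E' p| + X) := by ring
        rw [this]
        apply mul_le_mul e5 _ (by positivity) (by positivity)
        linarith [e4]
      have e7 : |ψ E' r0| * |m| ≤ |m| :=
        mul_le_of_le_one_left (abs_nonneg m) h2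
      have e8 : |ψ E' p| * bP ≤ (aP+1)*bP :=
        mul_le_mul_of_nonneg_right e4 hbP
      linarith [e2, e3, e6, e7, e8]
    have hXle : X ≤ X₀ := by
      rw [hX0def]
      exact arith_X haP hkey hR0def
    intro s hs
    have h9 := hMw s hs
    have e4 : |ψ E' p| ≤ aP + 1 := by
      have := abs_sub_abs_le_abs_sub (ψ E' p) (ψ E p)
      linarith [h3]
    have hfin : (|ψ E' p| + X)*c₅ ≤ M₁ := by
      rw [hM1def]
      apply mul_le_mul_of_nonneg_right _ hc₅0.le
      linarith [hXle, e4]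
    exact ⟨le_trans h9.1 hfin, le_trans h9.2 hfin⟩
  -- uniform Lipschitz bound for the radial derivative
  set K₁ := (C+1)*M₀ + 1 with hK1def
  have hK₁ : 0 < K₁ := by positivity
  have hLip : ∀ᶠ E' in 𝓝[≠] E, ∀ t ∈ J, ∀ s ∈ J,
      |deriv (ψ E') t - deriv (ψ E') s| ≤ K₁ * |t - s| := by
    filter_upwards [hsmall 1 one_pos, hMev] with E' h1 hM
    obtain ⟨hw1, hw2, hw3, hw4⟩ := reg_aux (hψC E')
    intro t ht s hs
    have hconv : Convex ℝ J := convex_Icc _ _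
    have hder : ∀ x ∈ J, DifferentiableAt ℝ (deriv (ψ E')) x :=
      fun x hx => (hw2 x (hJsub hx)).differentiableAt
    have hbound : ∀ x ∈ J, ‖deriv (deriv (ψ E')) x‖ ≤ K₁ := by
      intro x hx
      have hode := hODE E' x (hJsub hx)
      have hww : deriv (deriv (ψ E')) x = -(E' - V x - ℓ*(ℓ+1)/x^2) * ψ E' x := by
        linarith
      rw [Real.norm_eq_abs, hww, abs_mul, abs_neg]
      have hq := hqC x hx
      have h1q : |E' - V x - ℓ*(ℓ+1)/x^2| ≤ C + 1 := by
        have hsplit : E' - V x - ℓ*(ℓ+1)/x^2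
            = (E - V x - ℓ*(ℓ+1)/x^2) + (E' - E) := by ring
        rw [hsplit]
        have ha := abs_add_le (E - V x - ℓ*(ℓ+1)/x^2) (E' - E)
        linarith
      have hMx := (hM x hx).1
      calc |E' - V x - ℓ*(ℓ+1)/x^2| * |ψ E' x| ≤ (C+1) * M₀ :=
            mul_le_mul h1q hMx (abs_nonneg _) (by linarith)
        _ ≤ K₁ := by rw [hK1def]; linarith
    have hres := Convex.norm_image_sub_le_of_norm_deriv_le hder hbound hconv hs ht
    simpa [Real.norm_eq_abs] using hres
  -- pointwise convergence of the radial derivative off the zero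
  have hptw : ∀ s₁, s₁ ∈ J → ψ E s₁ ≠ 0 →
      Tendsto (fun E' => deriv (ψ E') s₁) (𝓝[≠] E) (𝓝 (deriv (ψ E) s₁)) := by
    intro s₁ hs₁ hqs₁
    have hs₁0 : s₁ ∈ Set.Ioi (0:ℝ) := hJsub hs₁
    have hid : ∀ E', deriv (ψ E') s₁ =
        (ψ E' s₁ * deriv (ψ E) s₁ - ψ E' r0 * m
          + ∫ s in r0..s₁, -((E' - E) * (ψ E s * ψ E' s))) / ψ E s₁ := by
      intro E'
      have h0 := hZ E' s₁ hs₁0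
      rw [hz, zero_mul] at h0
      rw [eq_div_iff hqs₁]
      linarith [h0]
    have hIntT : Tendsto (fun E' => ∫ s in r0..s₁, -((E' - E) * (ψ E s * ψ E' s)))
        (𝓝[≠] E) (𝓝 0) := by
      have hgT : Tendsto (fun E' : ℝ => |E' - E| * (U*M₀*δ)) (𝓝[≠] E) (𝓝 0) := by
        have h2 : Tendsto (fun E' : ℝ => |E' - E|) (𝓝 E) (𝓝 |E - E|) :=
          ((continuous_sub_right E).abs).tendsto E
        rw [sub_self, abs_zero] at h2
        have h3 := h2.mul_const (U*M₀*δ)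
        rw [zero_mul] at h3
        exact h3.mono_left nhdsWithin_le_nhds
      apply squeeze_zero_norm' ?_ hgT
      filter_upwards [hMev] with E' hM
      have hb1 : ∀ x ∈ Set.uIoc r0 s₁, ‖-((E' - E) * (ψ E x * ψ E' x))‖
          ≤ |E' - E| * (U * M₀) := by
        intro x hx
        have hxJ : x ∈ J := by
          rcases le_total r0 s₁ with hcase | hcase
          · rw [Set.uIoc_of_le hcase] at hx
            obtain ⟨hx1, hx2⟩ := hx
            obtain ⟨hj1, hj2⟩ := hs₁
            exact ⟨by linarith [hx1.le], by linarith⟩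
          · rw [Set.uIoc_of_ge hcase] at hx
            obtain ⟨hx1, hx2⟩ := hx
            obtain ⟨hj1, hj2⟩ := hs₁
            exact ⟨by linarith [hx1.le], by linarith⟩
        have hx1 : |ψ E x| ≤ U := hU x hxJ
        have hx2 : |ψ E' x| ≤ M₀ := (hM x hxJ).1
        rw [norm_neg, Real.norm_eq_abs, abs_mul, abs_mul]
        apply mul_le_mul_of_nonneg_left _ (abs_nonneg (E' - E))
        exact mul_le_mul hx1 hx2 (abs_nonneg _) hU0
      have hres := intervalIntegral.norm_integral_le_of_norm_le_const hb1
      apply le_trans hres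
      have hd : |s₁ - r0| ≤ δ := by
        obtain ⟨hj1, hj2⟩ := hs₁
        rw [abs_le]
        constructor <;> linarith
      calc |E' - E| * (U * M₀) * |s₁ - r0| ≤ |E' - E| * (U * M₀) * δ := by
            apply mul_le_mul_of_nonneg_left hd (by positivity)
        _ = |E' - E| * (U * M₀ * δ) := by ring
    have htend₁ := htendE s₁ hs₁0
    have htend₀ : Tendsto (fun E' => ψ E' r0) (𝓝[≠] E) (𝓝 0) := by
      have := htendE r0 hr0m
      rwa [hz] at this
    have hnum : Tendsto (fun E' => ψ E' s₁ * deriv (ψ E) s₁ - ψ E' r0 * m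
        + ∫ s in r0..s₁, -((E' - E) * (ψ E s * ψ E' s)))
        (𝓝[≠] E) (𝓝 (ψ E s₁ * deriv (ψ E) s₁ - 0 * m + 0)) :=
      ((htend₁.mul_const _).sub (htend₀.mul_const m)).add hIntT
    have hdivT := hnum.div_const (ψ E s₁)
    have heq2 : (ψ E s₁ * deriv (ψ E) s₁ - 0 * m + 0) / ψ E s₁ = deriv (ψ E) s₁ := by
      field_simp
      ring
    rw [heq2] at hdivT
    apply hdivT.congr
    intro E'
    rw [← hid E']
  -- KEY: eventual uniform closeness of the radial derivative to m near r0
  have KEY : ∀ ε : ℝ, 0 < ε → ∃ η : ℝ, 0 < η ∧ η ≤ δ ∧ ∀ᶠ E' in 𝓝[≠] E,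
      ∀ t ∈ Set.Icc (r0-η) (r0+η), |deriv (ψ E') t - m| ≤ ε := by
    intro ε hε
    have hcont : ContinuousAt (deriv (ψ E)) r0 :=
      hu4.continuousAt (isOpen_Ioi.mem_nhds hr0m)
    obtain ⟨θ, hθpos, hθc⟩ := Metric.continuousAt_iff.1 hcont (ε/4) (by positivity)
    set d₁ := min δ (min θ (ε/(4*K₁)))/2 with hd1def
    have hd₁ : 0 < d₁ := by positivity
    have hd₁δ : 2*d₁ ≤ δ := by
      have := min_le_left δ (min θ (ε/(4*K₁)))
      simp only [hd1def]
      linarith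
    have hd₁θ : 2*d₁ ≤ θ := by
      have h1 := min_le_right δ (min θ (ε/(4*K₁)))
      have h2 := min_le_left θ (ε/(4*K₁))
      simp only [hd1def]
      linarith
    have hd₁ε : 2*d₁ ≤ ε/(4*K₁) := by
      have h1 := min_le_right δ (min θ (ε/(4*K₁)))
      have h2 := min_le_right θ (ε/(4*K₁))
      simp only [hd1def]
      linarith
    set s₁ := r0 + d₁ with hs1def
    have hs₁J : s₁ ∈ J := by
      constructor <;> simp only [hs1def] <;> linarith
    have hs₁ne : s₁ ≠ r0 := by
      simp only [hs1def]
      intro h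
      have : d₁ = 0 := by linarith
      linarith
    have hψs₁ : ψ E s₁ ≠ 0 := hune s₁ hs₁J hs₁ne
    have hus₁ : |deriv (ψ E) s₁ - m| < ε/4 := by
      have hd : dist s₁ r0 < θ := by
        rw [Real.dist_eq]
        simp only [hs1def]
        rw [abs_of_pos (by linarith : (0:ℝ) < r0 + d₁ - r0)]
        linarith
      have := hθc hd
      rwa [Real.dist_eq] at this
    have hev₁ : ∀ᶠ E' in 𝓝[≠] E, |deriv (ψ E') s₁ - deriv (ψ E) s₁| ≤ ε/4 := by
      have hptw₁ := hptw s₁ hs₁J hψs₁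
      filter_upwards [hptw₁.eventually (Metric.eventually_nhds_iff.2
        ⟨ε/4, by positivity, fun y hy => le_of_lt (show |y - deriv (ψ E) s₁| < ε/4 by
          simpa [Real.dist_eq] using hy)⟩)] with E' hE' using hE'
    refine ⟨d₁, hd₁, by linarith, ?_⟩
    filter_upwards [hev₁, hLip] with E' h5 h6
    intro t ht
    obtain ⟨ht1, ht2⟩ := ht
    have htJ : t ∈ J := ⟨by linarith, by linarith⟩
    have h7 := h6 t htJ s₁ hs₁J
    have h8 : |t - s₁| ≤ 2*d₁ := by
      simp only [hs1def]
      rw [abs_le]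
      constructor <;> linarith
    have h9 : K₁ * |t - s₁| ≤ ε/4 := by
      have h10 : K₁ * |t - s₁| ≤ K₁ * (ε/(4*K₁)) := by
        apply mul_le_mul_of_nonneg_left _ hK₁.le
        linarith
      have h11 : K₁ * (ε/(4*K₁)) = ε/4 := by
        field_simp
      linarith [h10, h11]
    calc |deriv (ψ E') t - m|
        ≤ |deriv (ψ E') t - deriv (ψ E') s₁| + |deriv (ψ E') s₁ - m| := by
          have := abs_add_le (deriv (ψ E') t - deriv (ψ E') s₁) (deriv (ψ E') s₁ - m)
          simpa using this
      _ ≤ |deriv (ψ E') t - deriv (ψ E') s₁| + (|deriv (ψ E') s₁ - deriv (ψ E) s₁|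
            + |deriv (ψ E) s₁ - m|) := by
          have := abs_add_le (deriv (ψ E') s₁ - deriv (ψ E) s₁) (deriv (ψ E) s₁ - m)
          simp only [sub_add_sub_cancel] at this
          linarith
      _ ≤ ε/4 + (ε/4 + ε/4) :=
          add_le_add (le_trans h7 h9) (add_le_add h5 hus₁.le)
      _ ≤ ε := by linarith
  -- final step: identify the derivative of the line of zeros
  set L := deriv rbar E with hLdef
  have hrd : HasDerivAt rbar L E := (hrdiff E hE).hasDerivAt
  have hT1 : Tendsto (slope (fun E'' => ψ E'' r0) E) (𝓝[≠] E) (𝓝 (φ E r0)) :=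
    hasDerivAt_iff_tendsto_slope.1 (hφ E r0 hr0m)
  have hslopeR : Tendsto (slope rbar E) (𝓝[≠] E) (𝓝 L) :=
    hasDerivAt_iff_tendsto_slope.1 hrd
  have hT2 : Tendsto (slope (fun E'' => ψ E'' r0) E) (𝓝[≠] E) (𝓝 (-(m * L))) := by
    rw [Metric.tendsto_nhds]
    intro ε0 hε0
    set ε := ε0 / (2 * (|L| + 1)) with hεdef
    have hεpos : 0 < ε := by positivity
    obtain ⟨η, hη, hηδ, hKEYev⟩ := KEY ε hεpos
    have hIev : ∀ᶠ E' in 𝓝[≠] E, E' ∈ I :=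
      (hIopen.eventually_mem hE).filter_mono nhdsWithin_le_nhds
    have hrbarC : ContinuousAt rbar E := hrd.continuousAt
    have hrbarev : ∀ᶠ E' in 𝓝[≠] E, |rbar E' - r0| ≤ η := by
      have h1 := Metric.tendsto_nhds.1 hrbarC η hη
      have h2 := h1.filter_mono (nhdsWithin_le_nhds (s := {E}ᶜ))
      filter_upwards [h2] with E' hE'
      rw [Real.dist_eq] at hE'
      rw [hr0def]
      exact hE'.le
    have hslopeE : ∀ᶠ E' in 𝓝[≠] E, |slope rbar E E' - L| < ε0/(2*(|m|+1)) := by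
      have h1 := Metric.tendsto_nhds.1 hslopeR (ε0/(2*(|m|+1))) (by positivity)
      filter_upwards [h1] with E' h using by rwa [Real.dist_eq] at h
    have hslopeB : ∀ᶠ E' in 𝓝[≠] E, |slope rbar E E'| ≤ |L| + 1 := by
      have h1 := Metric.tendsto_nhds.1 hslopeR 1 one_pos
      filter_upwards [h1] with E' h
      rw [Real.dist_eq] at h
      calc |slope rbar E E'| ≤ |slope rbar E E' - L| + |L| := by
            have h2 := abs_add_le (slope rbar E E' - L) L
            simpa using h2
        _ ≤ |L| + 1 := by linarith [h.le]
    filter_upwards [hKEYev, hIev, hrbarev, hslopeB, hslopeE, self_mem_nhdsWithin]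
      with E' hKEY' hI' hrb' hslB' hslE' hne'
    have hEne : E' ≠ E := hne'
    obtain ⟨hw1, hw2, hw3, hw4⟩ := reg_aux (hψC E')
    have hsubJ : Set.Icc (r0-η) (r0+η) ⊆ J := by
      apply Set.Icc_subset_Icc <;> linarith
    have hIccsub : Set.uIcc r0 (rbar E') ⊆ Set.Icc (r0-η) (r0+η) := by
      have h1 := abs_le.1 hrb'
      apply Set.uIcc_subset_Icc ⟨by linarith, by linarith⟩ ⟨by linarith [h1.1], by linarith [h1.2]⟩
    have hsub0 : Set.uIcc r0 (rbar E') ⊆ Set.Ioi (0:ℝ) :=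
      fun x hx => hJsub (hsubJ (hIccsub hx))
    have hderball : ∀ x ∈ Set.uIcc r0 (rbar E'), HasDerivAt (ψ E') (deriv (ψ E') x) x :=
      fun x hx => hw1 x (hsub0 hx)
    have hintd : IntervalIntegrable (deriv (ψ E')) volume r0 (rbar E') :=
      (hw4.mono hsub0).intervalIntegrable
    have hFTC := intervalIntegral.integral_eq_sub_of_hasDerivAt hderball hintd
    rw [hzero E' hI'] at hFTC
    have hconst : (∫ _ in r0..(rbar E'), m) = (rbar E' - r0) * m := by
      simp [intervalIntegral.integral_const, smul_eq_mul]
    have hsplit : ψ E' r0 + m * (rbar E' - r0)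
        = -∫ s in r0..(rbar E'), (deriv (ψ E') s - m) := by
      rw [intervalIntegral.integral_sub hintd intervalIntegrable_const, hconst]
      linarith [hFTC]
    have hbnd : |ψ E' r0 + m * (rbar E' - r0)| ≤ ε * |rbar E' - r0| := by
      rw [hsplit, abs_neg]
      have hb : ∀ x ∈ Set.uIoc r0 (rbar E'), ‖deriv (ψ E') x - m‖ ≤ ε := by
        intro x hx
        have hxI : x ∈ Set.Icc (r0-η) (r0+η) :=
          hIccsub (Set.uIoc_subset_uIcc hx)
        rw [Real.norm_eq_abs]
        exact hKEY' x hxI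
      have hres := intervalIntegral.norm_integral_le_of_norm_le_const hb
      rw [Real.norm_eq_abs] at hres
      calc |∫ s in r0..(rbar E'), (deriv (ψ E') s - m)| ≤ ε * |rbar E' - r0| := hres
        _ ≤ ε * |rbar E' - r0| := le_refl _
    have hslopeval : slope rbar E E' = (rbar E' - r0)/(E' - E) := by
      rw [slope_def_field, hr0def]
    have e1 : slope (fun E'' => ψ E'' r0) E E' - (-(m*L))
        = (ψ E' r0 + m*(rbar E' - r0))/(E'-E) - m*(slope rbar E E' - L) := by
      rw [slope_def_field, hslopeval, hz]
      field_simp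
      ring
    rw [Real.dist_eq, e1]
    have hb1 : |(ψ E' r0 + m*(rbar E' - r0))/(E'-E)| ≤ ε0/2 := by
      have hEabs : 0 < |E' - E| := abs_pos.2 (sub_ne_zero.2 hEne)
      rw [abs_div, div_le_iff₀ hEabs]
      have hc1 : |rbar E' - r0| = |slope rbar E E'| * |E' - E| := by
        rw [hslopeval, abs_div]
        field_simp
      calc |ψ E' r0 + m*(rbar E' - r0)| ≤ ε * |rbar E' - r0| := hbnd
        _ = ε * |slope rbar E E'| * |E' - E| := by rw [hc1]; ring
        _ ≤ ε * (|L|+1) * |E' - E| := by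
            apply mul_le_mul_of_nonneg_right _ (abs_nonneg _)
            exact mul_le_mul_of_nonneg_left hslB' hεpos.le
        _ = ε0/2 * |E' - E| := by
            rw [hεdef]
            field_simp
    have hb2 : |m*(slope rbar E E' - L)| < ε0/2 := by
      rw [abs_mul]
      calc |m| * |slope rbar E E' - L| ≤ |m| * (ε0/(2*(|m|+1))) :=
            mul_le_mul_of_nonneg_left hslE'.le (abs_nonneg m)
        _ < ε0/2 := by
            rw [mul_div_assoc', div_lt_div_iff₀ (by positivity) two_pos]
            have hmn : 0 ≤ |m| := abs_nonneg m
            nlinarith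
    calc |(ψ E' r0 + m*(rbar E' - r0))/(E'-E) - m*(slope rbar E E' - L)|
        ≤ |(ψ E' r0 + m*(rbar E' - r0))/(E'-E)| + |m*(slope rbar E E' - L)| :=
          abs_sub _ _
      _ < ε0/2 + ε0/2 := add_lt_add_of_le_of_lt hb1 hb2
      _ = ε0 := by ring
  have hφL : φ E r0 = -(m * L) := tendsto_nhds_unique hT1 hT2
  have hm2 : m^2 ≠ 0 := pow_ne_zero 2 hm
  have hLval : L = -S / m^2 := by
    rw [eq_div_iff hm2]
    linear_combination m * hφL - hA
  constructor
  · exact hLval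
  · rw [hLval]
    rw [neg_div, neg_neg]
    positivity
end

section
/- Let ℓ ≥ 0, let a > 0, and let V : (0,∞) → ℝ be continuous on (0,a) and on (a,∞) with finite one-sided limits V(a⁻) and V(a⁺) at a. Let ψ : ℝ × (0,∞) → ℝ be such that: (i) for every E, the map r ↦ ψ(E,r) is continuously differentiable on (0,∞), and ψ satisfies ∂²ψ/∂r²(E,r) + (E − V(r) − ℓ(ℓ+1)/r²) ψ(E,r) = 0 for all r ≠ a; (ii) ψ is three times continuously differentiable jointly in (E,r) on ℝ × (0,a) and on ℝ × (a,∞), with all partial derivatives of order ≤ 3 not involving two or more r-derivatives extending continuously across r = a. Let Ē : (0,∞) → ℝ be a function with ψ(Ē(r), r) = 0 for all r > 0, continuously differentiable in a neighbourhood of a, three times differentiable on each side of a with one-sided limits Ē'''(a⁺) and Ē'''(a⁻), and suppose ∂ψ/∂E(Ē(a), a) ≠ 0. Then the third derivative of Ē has the jump Ē'''(a⁺) − Ē'''(a⁻) = −2 Ē'(a) (V(a⁺) − V(a⁻)). In particular, Ē''' is continuous at a if and only if V is continuous at a, whenever Ē'(a) ≠ 0. -/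
open Set Filter Topology

private lemma hasDerivAt_pfst {H : ℝ × ℝ → ℝ} {x : ℝ × ℝ}
    (h : DifferentiableAt ℝ H x) :
    HasDerivAt (fun E => H (E, x.2)) (fderiv ℝ H x (1, 0)) x.1 := by
  have hc : HasDerivAt (fun E : ℝ => (E, x.2)) ((1:ℝ), (0:ℝ)) x.1 :=
    (hasDerivAt_id x.1).prodMk (hasDerivAt_const x.1 x.2)
  have := h.hasFDerivAt.comp_hasDerivAt x.1 (by simpa using hc)
  simpa [Function.comp_def] using this

private lemma hasDerivAt_psnd {H : ℝ × ℝ → ℝ} {x : ℝ × ℝ}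
    (h : DifferentiableAt ℝ H x) :
    HasDerivAt (fun r => H (x.1, r)) (fderiv ℝ H x (0, 1)) x.2 := by
  have hc : HasDerivAt (fun r : ℝ => (x.1, r)) ((0:ℝ), (1:ℝ)) x.2 :=
    (hasDerivAt_const x.2 x.1).prodMk (hasDerivAt_id x.2)
  have := h.hasFDerivAt.comp_hasDerivAt x.2 (by simpa using hc)
  simpa [Function.comp_def] using this

private lemma hasDerivAt_pline {H : ℝ × ℝ → ℝ} {Eb : ℝ → ℝ} {r₀ e1 : ℝ}
    (h : DifferentiableAt ℝ H (Eb r₀, r₀)) (hEb : HasDerivAt Eb e1 r₀) :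
    HasDerivAt (fun r => H (Eb r, r))
      (fderiv ℝ H (Eb r₀, r₀) (1, 0) * e1 + fderiv ℝ H (Eb r₀, r₀) (0, 1)) r₀ := by
  have hc : HasDerivAt (fun r => (Eb r, r)) (e1, (1:ℝ)) r₀ := hEb.prodMk (hasDerivAt_id r₀)
  have h2 : HasDerivAt (fun r => H (Eb r, r)) (fderiv ℝ H (Eb r₀, r₀) (e1, (1:ℝ))) r₀ :=
    HasFDerivAt.comp_hasDerivAt (f := fun r => (Eb r, r)) r₀ h.hasFDerivAt hc
  have hv : (e1, (1:ℝ)) = e1 • ((1:ℝ), (0:ℝ)) + ((0:ℝ), (1:ℝ)) := by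
    simp [Prod.ext_iff]
  rw [hv, map_add, map_smul] at h2
  simpa [smul_eq_mul, mul_comm] using h2

private lemma hasFDerivAt_fderiv_apply {H : ℝ × ℝ → ℝ} {x : ℝ × ℝ}
    (h : DifferentiableAt ℝ (fderiv ℝ H) x) (v : ℝ × ℝ) :
    HasFDerivAt (fun y => fderiv ℝ H y v)
      ((ContinuousLinearMap.apply ℝ ℝ v).comp (fderiv ℝ (fderiv ℝ H) x)) x :=
  (ContinuousLinearMap.apply ℝ ℝ v).hasFDerivAt.comp x h.hasFDerivAt

private noncomputable def pdE (H : ℝ × ℝ → ℝ) : ℝ × ℝ → ℝ := fun y => fderiv ℝ H y (1, 0)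
private noncomputable def pdR (H : ℝ × ℝ → ℝ) : ℝ × ℝ → ℝ := fun y => fderiv ℝ H y (0, 1)

private lemma pdE_contDiffOn {F : ℝ × ℝ → ℝ} {s : Set (ℝ × ℝ)} {n m : WithTop ℕ∞}
    (hs : IsOpen s) (hF : ContDiffOn ℝ n F s) (hmn : m + 1 ≤ n) :
    ContDiffOn ℝ m (pdE F) s :=
  (ContinuousLinearMap.apply ℝ ℝ ((1:ℝ), (0:ℝ))).contDiff.comp_contDiffOn
    (hF.fderiv_of_isOpen hs hmn)

private lemma pdR_contDiffOn {F : ℝ × ℝ → ℝ} {s : Set (ℝ × ℝ)} {n m : WithTop ℕ∞}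
    (hs : IsOpen s) (hF : ContDiffOn ℝ n F s) (hmn : m + 1 ≤ n) :
    ContDiffOn ℝ m (pdR F) s :=
  (ContinuousLinearMap.apply ℝ ℝ ((0:ℝ), (1:ℝ))).contDiff.comp_contDiffOn
    (hF.fderiv_of_isOpen hs hmn)

private lemma pdE_differentiableAt {F : ℝ × ℝ → ℝ} {s : Set (ℝ × ℝ)}
    (hs : IsOpen s) (hF : ContDiffOn ℝ 2 F s) {x : ℝ × ℝ} (hx : x ∈ s) :
    DifferentiableAt ℝ (pdE F) x :=
  ((pdE_contDiffOn (m := 1) hs hF (by norm_num)).contDiffAt (hs.mem_nhds hx)).differentiableAt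
    one_ne_zero

private lemma pdR_differentiableAt {F : ℝ × ℝ → ℝ} {s : Set (ℝ × ℝ)}
    (hs : IsOpen s) (hF : ContDiffOn ℝ 2 F s) {x : ℝ × ℝ} (hx : x ∈ s) :
    DifferentiableAt ℝ (pdR F) x :=
  ((pdR_contDiffOn (m := 1) hs hF (by norm_num)).contDiffAt (hs.mem_nhds hx)).differentiableAt
    one_ne_zero

/-- Clairaut: `∂_r ∂_E F = ∂_E ∂_r F` at points of an open set where `F` is `C²`. -/
private lemma key_swap {F : ℝ × ℝ → ℝ} {s : Set (ℝ × ℝ)}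
    (hs : IsOpen s) (hF : ContDiffOn ℝ 2 F s) {x : ℝ × ℝ} (hx : x ∈ s) :
    fderiv ℝ (pdE F) x (0, 1) = pdE (pdR F) x := by
  have hFfd : DifferentiableAt ℝ (fderiv ℝ F) x :=
    ((hF.fderiv_of_isOpen (m := 1) hs (by norm_num)).contDiffAt (hs.mem_nhds hx)).differentiableAt
      one_ne_zero
  have h1 := (hasFDerivAt_fderiv_apply hFfd ((1:ℝ), (0:ℝ))).fderiv
  have h2 := (hasFDerivAt_fderiv_apply hFfd ((0:ℝ), (1:ℝ))).fderiv
  have hsym := (hF.contDiffAt (hs.mem_nhds hx)).isSymmSndFDerivAt (by simp)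
  show fderiv ℝ (fun y => fderiv ℝ F y (1, 0)) x (0, 1)
      = fderiv ℝ (fun y => fderiv ℝ F y (0, 1)) x (1, 0)
  rw [h1, h2]
  simpa using hsym ((0:ℝ), (1:ℝ)) ((1:ℝ), (0:ℝ))

private lemma pdE_congr {G G' : ℝ × ℝ → ℝ} {s : Set (ℝ × ℝ)} (hs : IsOpen s)
    (h : ∀ y ∈ s, G y = G' y) {x : ℝ × ℝ} (hx : x ∈ s) : pdE G x = pdE G' x := by
  have : G =ᶠ[nhds x] G' := Filter.eventuallyEq_of_mem (hs.mem_nhds hx) h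
  simp only [pdE, this.fderiv_eq]

private lemma side_identities
    (ℓ a : ℝ) (V : ℝ → ℝ) (ψ : ℝ → ℝ → ℝ) (Ebar : ℝ → ℝ)
    (S : Set ℝ) (hSo : IsOpen S) (hSsub : S ⊆ Set.Ioi 0) (hSa : a ∉ S)
    (hC3 : ContDiffOn ℝ 3 (fun p : ℝ × ℝ => ψ p.1 p.2) (Set.univ ×ˢ S))
    (hODE : ∀ E, ∀ r ∈ Set.Ioi (0:ℝ), r ≠ a →
      deriv (deriv (ψ E)) r + (E - V r - ℓ*(ℓ+1)/r^2) * ψ E r = 0)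
    (hzero : ∀ r ∈ Set.Ioi (0:ℝ), ψ (Ebar r) r = 0)
    (hd3 : ∀ r ∈ S, DifferentiableAt ℝ Ebar r ∧ DifferentiableAt ℝ (deriv Ebar) r ∧
      DifferentiableAt ℝ (deriv (deriv Ebar)) r) :
    ∀ r ∈ S,
      (deriv^[2] (fun E => ψ E r) (Ebar r) * (deriv Ebar r)^2
        + 2 * deriv^[1] (fun E => deriv (ψ E) r) (Ebar r) * deriv Ebar r
        + deriv^[1] (fun E => ψ E r) (Ebar r) * deriv (deriv Ebar) r = 0)
      ∧
      (deriv^[3] (fun E => ψ E r) (Ebar r) * (deriv Ebar r)^3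
        + 3 * deriv^[2] (fun E => deriv (ψ E) r) (Ebar r) * (deriv Ebar r)^2
        + 3 * deriv^[2] (fun E => ψ E r) (Ebar r) * deriv Ebar r * deriv (deriv Ebar) r
        + 3 * deriv^[1] (fun E => deriv (ψ E) r) (Ebar r) * deriv (deriv Ebar) r
        + 2 * (V r + ℓ*(ℓ+1)/r^2 - Ebar r) * deriv^[1] (fun E => ψ E r) (Ebar r) * deriv Ebar r
        + deriv^[1] (fun E => ψ E r) (Ebar r) * deriv (deriv (deriv Ebar)) r = 0) := by
  -- notation
  set F : ℝ × ℝ → ℝ := fun p => ψ p.1 p.2 with hFdef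
  set s : Set (ℝ × ℝ) := Set.univ ×ˢ S with hsdef
  have hs : IsOpen s := isOpen_univ.prod hSo
  have hmem : ∀ (E : ℝ) {r : ℝ}, r ∈ S → (E, r) ∈ s := fun E r hr => ⟨trivial, hr⟩
  have hC2 : ContDiffOn ℝ 2 F s := hC3.of_le (by norm_num)
  have hA1C2 : ContDiffOn ℝ 2 (pdE F) s := pdE_contDiffOn hs hC3 (by norm_num)
  have hB1C2 : ContDiffOn ℝ 2 (pdR F) s := pdR_contDiffOn hs hC3 (by norm_num)
  -- differentiability of everything we differentiate
  have hFd : ∀ x ∈ s, DifferentiableAt ℝ F x := fun x hx =>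
    (hC3.contDiffAt (hs.mem_nhds hx)).differentiableAt (by norm_num)
  have hA1d : ∀ x ∈ s, DifferentiableAt ℝ (pdE F) x := fun x hx =>
    pdE_differentiableAt hs hC2 hx
  have hB1d : ∀ x ∈ s, DifferentiableAt ℝ (pdR F) x := fun x hx =>
    pdR_differentiableAt hs hC2 hx
  have hA2d : ∀ x ∈ s, DifferentiableAt ℝ (pdE (pdE F)) x := fun x hx =>
    pdE_differentiableAt hs hA1C2 hx
  have hB2d : ∀ x ∈ s, DifferentiableAt ℝ (pdE (pdR F)) x := fun x hx =>
    pdE_differentiableAt hs hB1C2 hx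
  have hD'd : ∀ x ∈ s, DifferentiableAt ℝ (pdR (pdR F)) x := fun x hx =>
    pdR_differentiableAt hs hB1C2 hx
  -- pointwise values of ∂_r of pdE F, pdE (pdE F)
  have keyA1 : ∀ x ∈ s, fderiv ℝ (pdE F) x (0, 1) = pdE (pdR F) x := fun x hx =>
    key_swap hs hC2 hx
  have keyA2 : ∀ x ∈ s, fderiv ℝ (pdE (pdE F)) x (0, 1) = pdE (pdE (pdR F)) x := by
    intro x hx
    have h1 : fderiv ℝ (pdE (pdE F)) x (0, 1) = pdE (pdR (pdE F)) x := key_swap hs hA1C2 hx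
    rw [h1]
    exact pdE_congr hs keyA1 hx
  -- the ODE giving ∂_r (pdR F)
  have keyB1 : ∀ (E : ℝ), ∀ r ∈ S, HasDerivAt (fun r' => pdR F (E, r'))
      ((V r + ℓ*(ℓ+1)/r^2 - E) * ψ E r) r := by
    intro E r hr
    have hr0 : r ∈ Set.Ioi (0:ℝ) := hSsub hr
    -- pdR F (E, ·) agrees with deriv (ψ E) on S
    have hagree : ∀ r' ∈ S, pdR F (E, r') = deriv (ψ E) r' := by
      intro r' hr'
      exact ((hasDerivAt_psnd (hFd (E, r') (hmem E hr'))).deriv).symm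
    -- pdR F (E, ·) is differentiable at r
    have hdB : DifferentiableAt ℝ (fun r' => pdR F (E, r')) r := by
      have := hasDerivAt_psnd (hB1d (E, r) (hmem E hr))
      exact this.differentiableAt
    have heq : (fun r' => pdR F (E, r')) =ᶠ[nhds r] deriv (ψ E) :=
      Filter.eventuallyEq_of_mem (hSo.mem_nhds hr) hagree
    -- hence deriv (ψ E) is differentiable at r with the same derivative
    have hdd : HasDerivAt (deriv (ψ E)) (deriv (deriv (ψ E)) r) r := by
      have : DifferentiableAt ℝ (deriv (ψ E)) r := by
        exact (Filter.EventuallyEq.differentiableAt_iff heq).1 hdB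
      exact this.hasDerivAt
    have hval : deriv (deriv (ψ E)) r = (V r + ℓ*(ℓ+1)/r^2 - E) * ψ E r := by
      have := hODE E r hr0 (fun h => hSa (h ▸ hr))
      nlinarith [this]
    have : HasDerivAt (fun r' => pdR F (E, r')) (deriv (deriv (ψ E)) r) r :=
      hdd.congr_of_eventuallyEq heq
    rwa [hval] at this
  -- pointwise value of fderiv (pdR F) · (0,1) on s
  have keyB1' : ∀ (E : ℝ), ∀ r ∈ S,
      pdR (pdR F) (E, r) = (V r + ℓ*(ℓ+1)/r^2 - E) * ψ E r := by
    intro E r hr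
    have h1 := hasDerivAt_psnd (hB1d (E, r) (hmem E hr))
    exact h1.unique (keyB1 E r hr)
  -- ∂_r of pdE (pdR F)
  have keyB2 : ∀ (E : ℝ), ∀ r ∈ S, fderiv ℝ (pdE (pdR F)) (E, r) (0, 1)
      = -(ψ E r) + (V r + ℓ*(ℓ+1)/r^2 - E) * pdE F (E, r) := by
    intro E r hr
    have h1 : fderiv ℝ (pdE (pdR F)) (E, r) (0, 1) = pdE (pdR (pdR F)) (E, r) :=
      key_swap hs hB1C2 (hmem E hr)
    rw [h1]
    -- pdE (pdR (pdR F)) (E, r) = deriv (fun E' => pdR (pdR F) (E', r)) E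
    have h2 : deriv (fun E' => pdR (pdR F) (E', r)) E = fderiv ℝ (pdR (pdR F)) (E, r) (1, 0) :=
      (hasDerivAt_pfst (hD'd (E, r) (hmem E hr))).deriv
    have h3 : (fun E' => pdR (pdR F) (E', r)) = fun E' => (V r + ℓ*(ℓ+1)/r^2 - E') * ψ E' r :=
      funext fun E' => keyB1' E' r hr
    have h4 : HasDerivAt (fun E' => (V r + ℓ*(ℓ+1)/r^2 - E') * ψ E' r)
        ((-1) * ψ E r + (V r + ℓ*(ℓ+1)/r^2 - E) * pdE F (E, r)) E := by
      have ha : HasDerivAt (fun E' : ℝ => V r + ℓ*(ℓ+1)/r^2 - E') (-1) E := by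
        simpa using (hasDerivAt_id E).const_sub (V r + ℓ*(ℓ+1)/r^2)
      have hb : HasDerivAt (fun E' => ψ E' r) (pdE F (E, r)) E :=
        hasDerivAt_pfst (hFd (E, r) (hmem E hr))
      exact ha.mul hb
    show fderiv ℝ (pdR (pdR F)) (E, r) (1, 0) = _
    rw [← h2, h3, h4.deriv]
    ring
  -- iterate unfolding
  have it1 : ∀ g : ℝ → ℝ, deriv^[1] g = deriv g := fun g => congrFun (Function.iterate_one deriv) g
  have it2 : ∀ g : ℝ → ℝ, deriv^[2] g = deriv (deriv g) := by
    intro g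
    rw [show (2:ℕ) = 1+1 from rfl, Function.iterate_succ_apply', it1]
  have it3 : ∀ g : ℝ → ℝ, deriv^[3] g = deriv (deriv (deriv g)) := by
    intro g
    rw [show (3:ℕ) = 2+1 from rfl, Function.iterate_succ_apply', it2]
  -- conversion between one-variable derivatives and pdE/pdR
  have convA1' : ∀ r ∈ S, deriv (fun E' => ψ E' r) = fun E' => pdE F (E', r) := fun r hr =>
    funext fun E => (hasDerivAt_pfst (hFd (E, r) (hmem E hr))).deriv
  have convA2' : ∀ r ∈ S, deriv (fun E' => pdE F (E', r)) = fun E' => pdE (pdE F) (E', r) :=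
    fun r hr => funext fun E => (hasDerivAt_pfst (hA1d (E, r) (hmem E hr))).deriv
  have convB0' : ∀ r ∈ S, (fun E' => deriv (ψ E') r) = fun E' => pdR F (E', r) := fun r hr =>
    funext fun E => (hasDerivAt_psnd (hFd (E, r) (hmem E hr))).deriv
  have convB1' : ∀ r ∈ S, deriv (fun E' => pdR F (E', r)) = fun E' => pdE (pdR F) (E', r) :=
    fun r hr => funext fun E => (hasDerivAt_pfst (hB1d (E, r) (hmem E hr))).deriv
  have convP1 : ∀ (E : ℝ), ∀ r ∈ S, deriv^[1] (fun E' => ψ E' r) E = pdE F (E, r) := by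
    intro E r hr; rw [it1, convA1' r hr]
  have convP2 : ∀ (E : ℝ), ∀ r ∈ S, deriv^[2] (fun E' => ψ E' r) E = pdE (pdE F) (E, r) := by
    intro E r hr
    rw [it2, convA1' r hr]
    exact (hasDerivAt_pfst (hA1d (E, r) (hmem E hr))).deriv
  have convP3 : ∀ (E : ℝ), ∀ r ∈ S, deriv^[3] (fun E' => ψ E' r) E = pdE (pdE (pdE F)) (E, r) := by
    intro E r hr
    rw [it3, convA1' r hr, convA2' r hr]
    exact (hasDerivAt_pfst (hA2d (E, r) (hmem E hr))).deriv
  have convQ1 : ∀ (E : ℝ), ∀ r ∈ S, deriv^[1] (fun E' => deriv (ψ E') r) E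
      = pdE (pdR F) (E, r) := by
    intro E r hr
    rw [it1, convB0' r hr]
    exact (hasDerivAt_pfst (hB1d (E, r) (hmem E hr))).deriv
  have convQ2 : ∀ (E : ℝ), ∀ r ∈ S, deriv^[2] (fun E' => deriv (ψ E') r) E
      = pdE (pdE (pdR F)) (E, r) := by
    intro E r hr
    rw [it2, convB0' r hr, convB1' r hr]
    exact (hasDerivAt_pfst (hB2d (E, r) (hmem E hr))).deriv
  -- the line of zeros
  have hline : ∀ r ∈ S, (Ebar r, r) ∈ s := fun r hr => hmem _ hr
  have lemI : ∀ r ∈ S, pdE F (Ebar r, r) * deriv Ebar r + pdR F (Ebar r, r) = 0 := by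
    intro r hr
    have hEb : HasDerivAt Ebar (deriv Ebar r) r := (hd3 r hr).1.hasDerivAt
    have h1 := hasDerivAt_pline (hFd _ (hline r hr)) hEb
    have h0 : HasDerivAt (fun r' => F (Ebar r', r')) 0 r :=
      (hasDerivAt_const r (0:ℝ)).congr_of_eventuallyEq
        (Filter.eventuallyEq_of_mem (isOpen_Ioi.mem_nhds (hSsub hr))
          (fun r' hr' => hzero r' hr'))
    exact h1.unique h0
  have hA1line : ∀ r ∈ S, HasDerivAt (fun r' => pdE F (Ebar r', r'))
      (pdE (pdE F) (Ebar r, r) * deriv Ebar r + pdE (pdR F) (Ebar r, r)) r := by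
    intro r hr
    have hEb : HasDerivAt Ebar (deriv Ebar r) r := (hd3 r hr).1.hasDerivAt
    have h := hasDerivAt_pline (hA1d _ (hline r hr)) hEb
    rwa [keyA1 _ (hline r hr)] at h
  have hB1line : ∀ r ∈ S, HasDerivAt (fun r' => pdR F (Ebar r', r'))
      (pdE (pdR F) (Ebar r, r) * deriv Ebar r) r := by
    intro r hr
    have hEb : HasDerivAt Ebar (deriv Ebar r) r := (hd3 r hr).1.hasDerivAt
    have h := hasDerivAt_pline (hB1d _ (hline r hr)) hEb
    have h2 : fderiv ℝ (pdR F) (Ebar r, r) (0, 1) = 0 := by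
      have h3 := keyB1' (Ebar r) r hr
      rw [hzero r (hSsub hr), mul_zero] at h3
      exact h3
    rw [h2, add_zero] at h
    exact h
  have hA2line : ∀ r ∈ S, HasDerivAt (fun r' => pdE (pdE F) (Ebar r', r'))
      (pdE (pdE (pdE F)) (Ebar r, r) * deriv Ebar r + pdE (pdE (pdR F)) (Ebar r, r)) r := by
    intro r hr
    have hEb : HasDerivAt Ebar (deriv Ebar r) r := (hd3 r hr).1.hasDerivAt
    have h := hasDerivAt_pline (hA2d _ (hline r hr)) hEb
    rwa [keyA2 _ (hline r hr)] at h
  have hB2line : ∀ r ∈ S, HasDerivAt (fun r' => pdE (pdR F) (Ebar r', r'))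
      (pdE (pdE (pdR F)) (Ebar r, r) * deriv Ebar r
        + (V r + ℓ*(ℓ+1)/r^2 - Ebar r) * pdE F (Ebar r, r)) r := by
    intro r hr
    have hEb : HasDerivAt Ebar (deriv Ebar r) r := (hd3 r hr).1.hasDerivAt
    have h := hasDerivAt_pline (hB2d _ (hline r hr)) hEb
    have h2 : fderiv ℝ (pdE (pdR F)) (Ebar r, r) (0, 1)
        = (V r + ℓ*(ℓ+1)/r^2 - Ebar r) * pdE F (Ebar r, r) := by
      have h3 := keyB2 (Ebar r) r hr
      rw [hzero r (hSsub hr)] at h3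
      rw [h3]; ring
    rwa [h2] at h
  have lemII : ∀ r ∈ S, pdE (pdE F) (Ebar r, r) * (deriv Ebar r)^2
      + 2 * pdE (pdR F) (Ebar r, r) * deriv Ebar r
      + pdE F (Ebar r, r) * deriv (deriv Ebar) r = 0 := by
    intro r hr
    have hEb1 : HasDerivAt (deriv Ebar) (deriv (deriv Ebar) r) r := (hd3 r hr).2.1.hasDerivAt
    have hprod := ((hA1line r hr).mul hEb1).add (hB1line r hr)
    have h0 : HasDerivAt (fun r' => pdE F (Ebar r', r') * deriv Ebar r' + pdR F (Ebar r', r'))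
        0 r :=
      (hasDerivAt_const r (0:ℝ)).congr_of_eventuallyEq
        (Filter.eventuallyEq_of_mem (hSo.mem_nhds hr) (fun r' hr' => lemI r' hr'))
    have hkey := hprod.unique h0
    linear_combination hkey
  have lemIII : ∀ r ∈ S, pdE (pdE (pdE F)) (Ebar r, r) * (deriv Ebar r)^3
      + 3 * pdE (pdE (pdR F)) (Ebar r, r) * (deriv Ebar r)^2
      + 3 * pdE (pdE F) (Ebar r, r) * deriv Ebar r * deriv (deriv Ebar) r
      + 3 * pdE (pdR F) (Ebar r, r) * deriv (deriv Ebar) r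
      + 2 * (V r + ℓ*(ℓ+1)/r^2 - Ebar r) * pdE F (Ebar r, r) * deriv Ebar r
      + pdE F (Ebar r, r) * deriv (deriv (deriv Ebar)) r = 0 := by
    intro r hr
    have hEb1 : HasDerivAt (deriv Ebar) (deriv (deriv Ebar) r) r := (hd3 r hr).2.1.hasDerivAt
    have hEb2 : HasDerivAt (deriv (deriv Ebar)) (deriv (deriv (deriv Ebar)) r) r :=
      (hd3 r hr).2.2.hasDerivAt
    have hsq : HasDerivAt (fun r' => (deriv Ebar r')^2)
        (2 * deriv Ebar r * deriv (deriv Ebar) r) r := by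
      exact (hEb1.pow 2).congr_deriv (by norm_num)
    have hprod := (((hA2line r hr).mul hsq).add (((hB2line r hr).const_mul 2).mul hEb1)).add
      ((hA1line r hr).mul hEb2)
    have h0 : HasDerivAt (fun r' => pdE (pdE F) (Ebar r', r') * (deriv Ebar r')^2
        + 2 * pdE (pdR F) (Ebar r', r') * deriv Ebar r'
        + pdE F (Ebar r', r') * deriv (deriv Ebar) r') 0 r :=
      (hasDerivAt_const r (0:ℝ)).congr_of_eventuallyEq
        (Filter.eventuallyEq_of_mem (hSo.mem_nhds hr) (fun r' hr' => lemII r' hr'))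
    have hkey := hprod.unique h0
    linear_combination hkey
  intro r hr
  constructor
  · rw [convP2 (Ebar r) r hr, convQ1 (Ebar r) r hr, convP1 (Ebar r) r hr]
    exact lemII r hr
  · rw [convP3 (Ebar r) r hr, convQ2 (Ebar r) r hr, convP2 (Ebar r) r hr,
      convQ1 (Ebar r) r hr, convP1 (Ebar r) r hr]
    exact lemIII r hr


/-- Jump relation for the third derivative of the inverse line of zeros across
a discontinuity of the potential:
`Ē'''(a⁺) − Ē'''(a⁻) = −2 Ē'(a) (V(a⁺) − V(a⁻))`.
In particular `Ē'''` is continuous at `a` iff `V` is, whenever `Ē'(a) ≠ 0`. -/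
theorem jump_third_deriv_of_energy_line
    (ℓ : ℝ) (hℓ : 0 ≤ ℓ) (a : ℝ) (ha : 0 < a)
    (V : ℝ → ℝ) (Vm Vp : ℝ)
    -- V is continuous on (0,a) and (a,∞) with one-sided limits Vm = V(a⁻), Vp = V(a⁺)
    (hVc₁ : ContinuousOn V (Set.Ioo 0 a))
    (hVc₂ : ContinuousOn V (Set.Ioi a))
    (hVm : Tendsto V (nhdsWithin a (Set.Iio a)) (nhds Vm))
    (hVp : Tendsto V (nhdsWithin a (Set.Ioi a)) (nhds Vp))
    (ψ : ℝ → ℝ → ℝ)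
    -- (i) for each E, ψ(E,·) is C¹ on (0,∞) and solves the Schrödinger equation off r = a
    (hψC1 : ∀ E, ContDiffOn ℝ 1 (ψ E) (Set.Ioi 0))
    (hODE : ∀ E, ∀ r ∈ Set.Ioi (0 : ℝ), r ≠ a →
      deriv (deriv (ψ E)) r + (E - V r - ℓ * (ℓ + 1) / r ^ 2) * ψ E r = 0)
    -- (ii) ψ is jointly C³ on ℝ × (0,a) and on ℝ × (a,∞)
    (hψC3₁ : ContDiffOn ℝ 3 (fun p : ℝ × ℝ => ψ p.1 p.2) (Set.univ ×ˢ Set.Ioo 0 a))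
    (hψC3₂ : ContDiffOn ℝ 3 (fun p : ℝ × ℝ => ψ p.1 p.2) (Set.univ ×ˢ Set.Ioi a))
    -- partial derivatives of order ≤ 3 involving at most one r-derivative extend
    -- continuously across r = a:
    (hcontE : ∀ i : ℕ, i ≤ 3 → ContinuousOn
      (fun p : ℝ × ℝ => deriv^[i] (fun E => ψ E p.2) p.1)
      (Set.univ ×ˢ Set.Ioi 0))
    (hcontEr : ∀ i : ℕ, i ≤ 2 → ContinuousOn
      (fun p : ℝ × ℝ => deriv^[i] (fun E => deriv (ψ E) p.2) p.1)
      (Set.univ ×ˢ Set.Ioi 0))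
    -- the inverse line of zeros Ē, C¹ near a, three times differentiable on each
    -- side of a, with one-sided limits Tm = Ē'''(a⁻) and Tp = Ē'''(a⁺)
    (Ebar : ℝ → ℝ)
    (hzero : ∀ r ∈ Set.Ioi (0 : ℝ), ψ (Ebar r) r = 0)
    (hC1 : ContDiffAt ℝ 1 Ebar a)
    (hd3m : ∀ r ∈ Set.Ioo 0 a, DifferentiableAt ℝ Ebar r ∧
      DifferentiableAt ℝ (deriv Ebar) r ∧ DifferentiableAt ℝ (deriv (deriv Ebar)) r)
    (hd3p : ∀ r ∈ Set.Ioi a, DifferentiableAt ℝ Ebar r ∧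
      DifferentiableAt ℝ (deriv Ebar) r ∧ DifferentiableAt ℝ (deriv (deriv Ebar)) r)
    (Tm Tp : ℝ)
    (hTm : Tendsto (deriv (deriv (deriv Ebar))) (nhdsWithin a (Set.Iio a)) (nhds Tm))
    (hTp : Tendsto (deriv (deriv (deriv Ebar))) (nhdsWithin a (Set.Ioi a)) (nhds Tp))
    -- nondegeneracy: ∂ψ/∂E(Ē(a), a) ≠ 0
    (hnd : deriv (fun E => ψ E a) (Ebar a) ≠ 0) :
    Tp - Tm = -2 * deriv Ebar a * (Vp - Vm) ∧
    (deriv Ebar a ≠ 0 → (Tp = Tm ↔ Vp = Vm)) := by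
  -- one-sided identities
  have hm := side_identities ℓ a V ψ Ebar (Set.Ioo 0 a) isOpen_Ioo (fun r hr => hr.1)
    (fun h => lt_irrefl a h.2) hψC3₁ hODE hzero hd3m
  have hp := side_identities ℓ a V ψ Ebar (Set.Ioi a) isOpen_Ioi
    (fun r hr => lt_trans ha hr) (fun h => lt_irrefl a h) hψC3₂ hODE hzero hd3p
  -- continuity of the line and of the transversal partial derivatives at r = a
  have hopen : IsOpen ((Set.univ : Set ℝ) ×ˢ Set.Ioi (0:ℝ)) := isOpen_univ.prod isOpen_Ioi
  have hx₀mem : ((Ebar a, a) : ℝ × ℝ) ∈ Set.univ ×ˢ Set.Ioi (0:ℝ) := ⟨trivial, ha⟩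
  have hEbc : ContinuousAt Ebar a := hC1.continuousAt
  have hlinec : ContinuousAt (fun r => ((Ebar r, r) : ℝ × ℝ)) a := hEbc.prodMk continuousAt_id
  have he1c : ContinuousAt (deriv Ebar) a := by
    obtain ⟨u, hu, hcd⟩ := hC1.contDiffOn (le_refl 1) (by simp)
    have hiu : a ∈ interior u := mem_interior_iff_mem_nhds.2 hu
    exact ((hcd.mono interior_subset).continuousOn_deriv_of_isOpen isOpen_interior
      (le_refl 1)).continuousAt (isOpen_interior.mem_nhds hiu)
  have hP1ne : deriv^[1] (fun E => ψ E a) (Ebar a) ≠ 0 := by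
    rw [congrFun (Function.iterate_one deriv) (fun E => ψ E a)]
    exact hnd
  -- the common limit of the second derivative
  set L : ℝ := -(deriv^[2] (fun E => ψ E a) (Ebar a) * (deriv Ebar a)^2
      + 2 * deriv^[1] (fun E => deriv (ψ E) a) (Ebar a) * deriv Ebar a)
      / deriv^[1] (fun E => ψ E a) (Ebar a) with hLdef
  -- the one-sided limit computation
  have key : ∀ (l : Filter ℝ) (S' : Set ℝ) (W T' : ℝ), l.NeBot → l ≤ nhds a → S' ∈ l →
      (∀ r ∈ S',
        (deriv^[2] (fun E => ψ E r) (Ebar r) * (deriv Ebar r)^2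
          + 2 * deriv^[1] (fun E => deriv (ψ E) r) (Ebar r) * deriv Ebar r
          + deriv^[1] (fun E => ψ E r) (Ebar r) * deriv (deriv Ebar) r = 0)
        ∧
        (deriv^[3] (fun E => ψ E r) (Ebar r) * (deriv Ebar r)^3
          + 3 * deriv^[2] (fun E => deriv (ψ E) r) (Ebar r) * (deriv Ebar r)^2
          + 3 * deriv^[2] (fun E => ψ E r) (Ebar r) * deriv Ebar r * deriv (deriv Ebar) r
          + 3 * deriv^[1] (fun E => deriv (ψ E) r) (Ebar r) * deriv (deriv Ebar) r
          + 2 * (V r + ℓ*(ℓ+1)/r^2 - Ebar r) * deriv^[1] (fun E => ψ E r) (Ebar r) * deriv Ebar r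
          + deriv^[1] (fun E => ψ E r) (Ebar r) * deriv (deriv (deriv Ebar)) r = 0)) →
      Tendsto V l (nhds W) →
      Tendsto (deriv (deriv (deriv Ebar))) l (nhds T') →
      deriv^[3] (fun E => ψ E a) (Ebar a) * (deriv Ebar a)^3
        + 3 * deriv^[2] (fun E => deriv (ψ E) a) (Ebar a) * (deriv Ebar a)^2
        + 3 * deriv^[2] (fun E => ψ E a) (Ebar a) * deriv Ebar a * L
        + 3 * deriv^[1] (fun E => deriv (ψ E) a) (Ebar a) * L
        + 2 * (W + ℓ*(ℓ+1)/a^2 - Ebar a) * deriv^[1] (fun E => ψ E a) (Ebar a) * deriv Ebar a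
        + deriv^[1] (fun E => ψ E a) (Ebar a) * T' = 0 := by
    intro l S' W T' hbot hle hS' hid hV hT
    haveI := hbot
    have tP : ∀ i : ℕ, i ≤ 3 → Tendsto (fun r => deriv^[i] (fun E => ψ E r) (Ebar r)) l
        (nhds (deriv^[i] (fun E => ψ E a) (Ebar a))) := by
      intro i hi
      exact (((hcontE i hi).continuousAt (hopen.mem_nhds hx₀mem)).tendsto.comp
        (hlinec.tendsto.mono_left hle))
    have tQ : ∀ i : ℕ, i ≤ 2 → Tendsto (fun r => deriv^[i] (fun E => deriv (ψ E) r) (Ebar r)) l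
        (nhds (deriv^[i] (fun E => deriv (ψ E) a) (Ebar a))) := by
      intro i hi
      exact (((hcontEr i hi).continuousAt (hopen.mem_nhds hx₀mem)).tendsto.comp
        (hlinec.tendsto.mono_left hle))
    have te1 : Tendsto (deriv Ebar) l (nhds (deriv Ebar a)) := he1c.tendsto.mono_left hle
    have tEb : Tendsto Ebar l (nhds (Ebar a)) := hEbc.tendsto.mono_left hle
    have tc : Tendsto (fun r => ℓ*(ℓ+1)/r^2) l (nhds (ℓ*(ℓ+1)/a^2)) := by
      refine Tendsto.mono_left ?_ hle
      exact (continuousAt_const.div (continuousAt_id.pow 2) (pow_ne_zero 2 (ne_of_gt ha)))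
    have hP1ev : ∀ᶠ r in l, deriv^[1] (fun E => ψ E r) (Ebar r) ≠ 0 :=
      (tP 1 (by norm_num)).eventually_ne hP1ne
    -- limit of the second derivative of Ebar
    have te2 : Tendsto (deriv (deriv Ebar)) l (nhds L) := by
      have hev : (fun r => -(deriv^[2] (fun E => ψ E r) (Ebar r) * (deriv Ebar r)^2
          + 2 * deriv^[1] (fun E => deriv (ψ E) r) (Ebar r) * deriv Ebar r)
          / deriv^[1] (fun E => ψ E r) (Ebar r)) =ᶠ[l] deriv (deriv Ebar) := by
        filter_upwards [hS', hP1ev] with r hr hne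
        have h2 := (hid r hr).1
        rw [div_eq_iff hne]
        linear_combination -h2
      refine Tendsto.congr' hev ?_
      rw [hLdef]
      exact Tendsto.div (((tP 2 (by norm_num)).mul (te1.pow 2)).add
        (((tQ 1 (by norm_num)).const_mul 2).mul te1)).neg (tP 1 (by norm_num)) hP1ne
    -- the full third-order identity passes to the limit
    have tfin : Tendsto (fun r => deriv^[3] (fun E => ψ E r) (Ebar r) * (deriv Ebar r)^3
        + 3 * deriv^[2] (fun E => deriv (ψ E) r) (Ebar r) * (deriv Ebar r)^2
        + 3 * deriv^[2] (fun E => ψ E r) (Ebar r) * deriv Ebar r * deriv (deriv Ebar) r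
        + 3 * deriv^[1] (fun E => deriv (ψ E) r) (Ebar r) * deriv (deriv Ebar) r
        + 2 * (V r + ℓ*(ℓ+1)/r^2 - Ebar r) * deriv^[1] (fun E => ψ E r) (Ebar r) * deriv Ebar r
        + deriv^[1] (fun E => ψ E r) (Ebar r) * deriv (deriv (deriv Ebar)) r) l
        (nhds (deriv^[3] (fun E => ψ E a) (Ebar a) * (deriv Ebar a)^3
          + 3 * deriv^[2] (fun E => deriv (ψ E) a) (Ebar a) * (deriv Ebar a)^2
          + 3 * deriv^[2] (fun E => ψ E a) (Ebar a) * deriv Ebar a * L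
          + 3 * deriv^[1] (fun E => deriv (ψ E) a) (Ebar a) * L
          + 2 * (W + ℓ*(ℓ+1)/a^2 - Ebar a) * deriv^[1] (fun E => ψ E a) (Ebar a) * deriv Ebar a
          + deriv^[1] (fun E => ψ E a) (Ebar a) * T')) := by
      exact ((((((tP 3 (by norm_num)).mul (te1.pow 3)).add
        (((tQ 2 (by norm_num)).const_mul 3).mul (te1.pow 2))).add
        ((((tP 2 (by norm_num)).const_mul 3).mul te1).mul te2)).add
        (((tQ 1 (by norm_num)).const_mul 3).mul te2)).add
        (((((hV.add tc).sub tEb).const_mul 2).mul (tP 1 (by norm_num))).mul te1)).add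
        ((tP 1 (by norm_num)).mul hT)
    have t0 : Tendsto (fun r => deriv^[3] (fun E => ψ E r) (Ebar r) * (deriv Ebar r)^3
        + 3 * deriv^[2] (fun E => deriv (ψ E) r) (Ebar r) * (deriv Ebar r)^2
        + 3 * deriv^[2] (fun E => ψ E r) (Ebar r) * deriv Ebar r * deriv (deriv Ebar) r
        + 3 * deriv^[1] (fun E => deriv (ψ E) r) (Ebar r) * deriv (deriv Ebar) r
        + 2 * (V r + ℓ*(ℓ+1)/r^2 - Ebar r) * deriv^[1] (fun E => ψ E r) (Ebar r) * deriv Ebar r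
        + deriv^[1] (fun E => ψ E r) (Ebar r) * deriv (deriv (deriv Ebar)) r) l (nhds 0) := by
      refine Tendsto.congr' ?_ tendsto_const_nhds
      filter_upwards [hS'] with r hr
      exact ((hid r hr).2).symm
    exact tendsto_nhds_unique tfin t0
  -- apply on both sides
  have h₁ := key (nhdsWithin a (Set.Iio a)) (Set.Ioo 0 a) Vm Tm inferInstance
    nhdsWithin_le_nhds (Ioo_mem_nhdsLT_of_mem ⟨ha, le_refl a⟩) hm hVm hTm
  have h₂ := key (nhdsWithin a (Set.Ioi a)) (Set.Ioi a) Vp Tp inferInstance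
    nhdsWithin_le_nhds self_mem_nhdsWithin hp hVp hTp
  have h3 : deriv^[1] (fun E => ψ E a) (Ebar a) * (2*(Vp-Vm)*deriv Ebar a + (Tp-Tm)) = 0 := by
    linear_combination h₂ - h₁
  have h4 : 2*(Vp-Vm)*deriv Ebar a + (Tp-Tm) = 0 := by
    rcases mul_eq_zero.mp h3 with h | h
    · exact absurd h hP1ne
    · exact h
  constructor
  · linear_combination h4
  · intro hne
    constructor
    · intro h
      have h5 : (Vp - Vm) * (2 * deriv Ebar a) = 0 := by
        rw [h] at h4
        linear_combination h4
      rcases mul_eq_zero.mp h5 with h6 | h6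
      · linarith
      · exact absurd h6 (by simp [hne])
    · intro h
      rw [h] at h4
      linarith [h4]
end

section
/- Let V : (0,∞) → ℝ be measurable with ∫₀^∞ |V(r)| dr < ∞ and ∫₀^∞ r |V(r)| dr < ∞. Define the Born-approximation s-wave phase function F : (0,∞) → ℝ by F(k) = −∫₀^∞ sin(kr)² V(r) dr (so that F(k) = k δ_Born(ℓ=0,k)), and define the sine transform g : (0,∞) → ℝ by g(q) = ∫₀^∞ sin(qr) · r V(r) dr. Then F is differentiable on (0,∞) and for every k > 0, F'(k) = −g(2k). Consequently, knowledge of the s-wave Born phase shifts δ_Born(0,k) for all k ≥ k₀ determines g(q) for all q ≥ 2k₀ via g(2k) = −d(k δ_Born(0,k))/dk. -/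
open Set Filter Topology MeasureTheory

/-- The Born-approximation s-wave phase function
`F(k) = −∫₀^∞ sin(kr)² V(r) dr = k δ_Born(0,k)` is differentiable on `(0,∞)`
and its derivative is `F'(k) = −g(2k)`, where
`g(q) = ∫₀^∞ sin(qr) r V(r) dr` is the Fourier sine transform of `r V(r)`.
Hence the s-wave Born phase shifts for `k ≥ k₀` determine `g(q)` for `q ≥ 2k₀`. -/
theorem born_phase_deriv_eq_neg_sine_transform
    (V : ℝ → ℝ) (hmeas : Measurable V)
    (hint : IntegrableOn V (Set.Ioi 0))
    (hint' : IntegrableOn (fun r => r * V r) (Set.Ioi 0)) :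
    ∀ k ∈ Set.Ioi (0 : ℝ),
      HasDerivAt (fun k' : ℝ => -∫ r in Set.Ioi (0 : ℝ), Real.sin (k' * r) ^ 2 * V r)
        (-(∫ r in Set.Ioi (0 : ℝ), Real.sin (2 * k * r) * (r * V r))) k := by
  intro k hk
  set μ := (volume : Measure ℝ).restrict (Set.Ioi (0 : ℝ))
  have key : HasDerivAt (fun k' : ℝ => ∫ r in Set.Ioi (0 : ℝ), Real.sin (k' * r) ^ 2 * V r)
      (∫ r in Set.Ioi (0 : ℝ), Real.sin (2 * k * r) * (r * V r)) k := by
    have h := hasDerivAt_integral_of_dominated_loc_of_deriv_le (μ := μ)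
      (F := fun k' r => Real.sin (k' * r) ^ 2 * V r)
      (F' := fun k' r => Real.sin (2 * k' * r) * (r * V r))
      (bound := fun r => |r * V r|) (x₀ := k) (s := Metric.ball k 1) (Metric.ball_mem_nhds k one_pos)
      ?_ ?_ ?_ ?_ ?_ ?_
    · exact h.2
    · filter_upwards with x
      exact (((Real.measurable_sin.comp ((measurable_const.mul measurable_id))).pow_const
        2).mul hmeas).aestronglyMeasurable
    · apply hint.abs.mono'
      · exact (((Real.measurable_sin.comp ((measurable_const.mul measurable_id))).pow_const
          2).mul hmeas).aestronglyMeasurable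
      · filter_upwards with r
        rw [norm_mul, Real.norm_eq_abs, Real.norm_eq_abs]
        have h1 : |Real.sin (k * r) ^ 2| ≤ 1 := by
          rw [abs_pow, sq_abs]
          exact Real.sin_sq_le_one _
        nlinarith [abs_nonneg (V r)]
    · exact ((Real.measurable_sin.comp (measurable_const.mul measurable_id)).mul
        (measurable_id.mul hmeas)).aestronglyMeasurable
    · filter_upwards with r
      intro x hx
      rw [Real.norm_eq_abs, abs_mul]
      have := Real.abs_sin_le_one (2 * x * r)
      nlinarith [abs_nonneg (r * V r)]
    · exact hint'.abs
    · filter_upwards with r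
      intro x hx
      have h1 : HasDerivAt (fun y : ℝ => Real.sin (y * r) ^ 2)
          (Real.sin (2 * x * r) * r) x := by
        have hs : HasDerivAt (fun y : ℝ => Real.sin (y * r)) (Real.cos (x * r) * r) x := by
          exact ((Real.hasDerivAt_sin (x * r)).comp x ((hasDerivAt_id x).mul_const r)).congr_deriv (by ring : _ = Real.cos (x * r) * r)
        have := hs.fun_pow 2
        refine this.congr_deriv ?_
        have : Real.sin (2 * x * r) = 2 * Real.sin (x * r) * Real.cos (x * r) := by
          rw [mul_assoc, Real.sin_two_mul]
        rw [this]; ring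
      have := h1.mul_const (V r)
      refine this.congr_deriv ?_
      ring
  exact key.neg
end
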